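/- arXiv:2404.10410 — 5 statements merged into one kernel-verified Lean document; each statement's English description precedes it below -/
import Mathlib

section
/- Let T be an invertible generalized hyperbolic operator on a complex Banach space X with splitting X = M ⊕ N, and suppose there exists a nonzero vector y ∈ M ∩ T(N). Let p ∈ ℕ and S : X → X be any map. If h : X → X is a homeomorphism with S = h ∘ T^p ∘ h⁻¹ and sup_{x∈X} ‖h(x) − x‖ < ∞, then there exist uncountably many homeomorphisms g : X → X with S = g ∘ T^p ∘ g⁻¹ and sup_{x∈X} ‖g(x) − x‖ < ∞. Moreover, for every δ > 0, if sup_{x∈X} ‖h(x) − x‖ < δ, then uncountably many such g additionally satisfy sup_{x∈X} ‖g(x) − x‖ < δ. -/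
/-!
The conjugacies are `h ∘ (· + t • z)`, `t ∈ ℝ`, where `z ≠ 0` is a fixed point of `T^{p+1}`:
translation by `t • z` commutes with `T^{p+1}`, distinct `t` give distinct maps, and
`‖g_t - I‖_∞ ≤ ‖h - I‖_∞ + |t| ‖z‖`, so a whole interval of `t` respects the bound `δ`.
Writing `y = T w` with `w ∈ N`, the fixed point is the two-sided orbit sum
`z = ∑_{n ≥ 0} T^{(p+1)n} y + ∑_{n ≥ 1} T^{-(p+1)n} y`: the first series converges in `M` and the
second in `N` because `T|_M` and `T⁻¹|_N` have spectral radius `< 1` (Gelfand's formula), and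
`z ≠ 0` because its `M`-component `a` satisfies `T^{p+1} a = a - y`.
-/

noncomputable section

/-- Restriction of a continuous linear map to an invariant subspace. -/
def restrictOp {𝕜 X : Type*} [NontriviallyNormedField 𝕜] [NormedAddCommGroup X]
    [NormedSpace 𝕜 X] (T : X →L[𝕜] X) (M : Submodule 𝕜 X)
    (hM : ∀ x ∈ M, T x ∈ M) : M →L[𝕜] M :=
  (T.comp M.subtypeL).codRestrict M fun x => hM x x.2

/-- `T` is an (invertible) generalized hyperbolic operator: there are closed subspaces
`M`, `N` with `X = M ⊕ N` (topological direct sum), `T(M) ⊆ M` with `σ(T|_M) ⊆ 𝔻`, and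
`T⁻¹(N) ⊆ N` with `σ(T⁻¹|_N) ⊆ 𝔻`. -/
def IsGenHyperbolic {X : Type*} [NormedAddCommGroup X] [NormedSpace ℂ X]
    (T : X ≃L[ℂ] X) : Prop :=
  ∃ (M N : Submodule ℂ X), IsClosed (M : Set X) ∧ IsClosed (N : Set X) ∧
    IsCompl M N ∧
    ∃ (hM : ∀ x ∈ M, T x ∈ M) (hN : ∀ x ∈ N, T.symm x ∈ N),
      spectrum ℂ (restrictOp (T : X →L[ℂ] X) M hM) ⊆ Metric.ball (0 : ℂ) 1 ∧
      spectrum ℂ (restrictOp (T.symm : X →L[ℂ] X) N hN) ⊆ Metric.ball (0 : ℂ) 1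

/-- The sup-norm of the map `F` is finite, i.e. `F` is a bounded map. -/
def BoundedMap {X Y : Type*} [Norm Y] (F : X → Y) : Prop :=
  ∃ C, ∀ x, ‖F x‖ ≤ C

/-- `‖F‖_∞ < ε`. -/
def SupNormLt {X Y : Type*} [Norm Y] (F : X → Y) (ε : ℝ) : Prop :=
  ∃ c, c < ε ∧ ∀ x, ‖F x‖ ≤ c

/-- `Lip(F) < ε`: `F` is Lipschitz with some constant `< ε`. -/
def LipLt {X Y : Type*} [PseudoEMetricSpace X] [PseudoEMetricSpace Y]
    (F : X → Y) (ε : ℝ) : Prop :=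
  ∃ c : NNReal, (c : ℝ) < ε ∧ LipschitzWith c F

/-- The composition `S 0 ∘ S 1 ∘ ⋯ ∘ S (p-1)`. -/
def CompFamily {X : Type*} (p : ℕ) (S : Fin p → X → X) : X → X :=
  (List.ofFn S).foldr (· ∘ ·) id


open Filter

theorem summable_norm_pow_of_spectrum_subset_ball {A : Type*} [NormedRing A] [NormedAlgebra ℂ A]
    [CompleteSpace A] (a : A) (ha : spectrum ℂ a ⊆ Metric.ball 0 1) :
    Summable fun n => ‖a ^ n‖ := by
  cases subsingleton_or_nontrivial A
  · simp [Subsingleton.elim _ (0 : A)]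
  have hρ : spectralRadius ℂ a < 1 := by
    simpa using spectrum.spectralRadius_lt_of_forall_lt a (r := 1) fun z hz => by
      simpa [← NNReal.coe_lt_coe] using ha hz
  obtain ⟨r, hρr, hr1⟩ := ENNReal.lt_iff_exists_nnreal_btwn.mp hρ
  refine .of_norm_bounded_eventually_nat
    (summable_geometric_of_lt_one r.coe_nonneg (by exact_mod_cast hr1)) ?_
  have hgelfand := spectrum.pow_nnnorm_pow_one_div_tendsto_nhds_spectralRadius a
  filter_upwards [hgelfand.eventually_lt_const hρr, eventually_ne_atTop 0] with n hn hn0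
  rw [one_div, ENNReal.rpow_inv_lt_iff (by positivity), ENNReal.rpow_natCast, ← ENNReal.coe_pow,
    ENNReal.coe_lt_coe] at hn
  rw [norm_norm]
  exact_mod_cast hn.le

theorem restrictOp_apply_coe {𝕜 X : Type*} [NontriviallyNormedField 𝕜] [NormedAddCommGroup X]
    [NormedSpace 𝕜 X] (T : X →L[𝕜] X) (M : Submodule 𝕜 X) (hM : ∀ x ∈ M, T x ∈ M) (m : M) :
    (restrictOp T M hM m : X) = T m :=
  rfl

theorem restrictOp_pow_apply_coe {𝕜 X : Type*} [NontriviallyNormedField 𝕜] [NormedAddCommGroup X]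
    [NormedSpace 𝕜 X] (T : X →L[𝕜] X) (M : Submodule 𝕜 X) (hM : ∀ x ∈ M, T x ∈ M) (n : ℕ)
    (m : M) : ((restrictOp T M hM ^ n) m : X) = (⇑T)^[n] m := by
  rw [FunLike.coe_pow_eq_iterate]
  exact (Function.Semiconj.iterate_right (restrictOp_apply_coe T M hM) n) m

theorem summable_norm_iterate_of_spectrum_restrictOp_subset_ball {X : Type*}
    [NormedAddCommGroup X] [NormedSpace ℂ X] [CompleteSpace X] (T : X →L[ℂ] X)
    {M : Submodule ℂ X} (hMc : IsClosed (M : Set X)) (hM : ∀ x ∈ M, T x ∈ M)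
    (hsM : spectrum ℂ (restrictOp T M hM) ⊆ Metric.ball 0 1) {x : X} (hx : x ∈ M) :
    Summable fun n => ‖(⇑T)^[n] x‖ := by
  have := hMc.completeSpace_coe
  have hs := summable_norm_pow_of_spectrum_subset_ball (restrictOp T M hM) hsM
  refine .of_nonneg_of_le (fun _ => norm_nonneg _) (fun n => ?_) (hs.mul_right ‖x‖)
  rw [← restrictOp_pow_apply_coe T M hM n ⟨x, hx⟩]
  exact (restrictOp T M hM ^ n).le_opNorm ⟨x, hx⟩

section OrbitSums

variable {R X : Type*} [Ring R] [AddCommGroup X] [Module R X] [TopologicalSpace X]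
  [IsTopologicalAddGroup X] [T2Space X]

theorem ContinuousLinearMap.apply_tsum_iterate (f : X →L[R] X) {x : X}
    (hx : Summable fun n => f^[n] x) : f (∑' n, f^[n] x) = ∑' n, f^[n] x - x := by
  rw [f.map_tsum hx, hx.tsum_eq_zero_add]
  simp only [Function.iterate_succ_apply', Function.iterate_zero_apply, add_sub_cancel_left]

theorem ContinuousLinearMap.apply_tsum_iterate_of_leftInverse {f g : X →L[R] X}
    (hfg : Function.LeftInverse f g) {x : X} (hx : Summable fun n => g^[n] x) :
    f (∑' n, g^[n] x) = f x + ∑' n, g^[n] x := by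
  have h := hfg (∑' n, g^[n] x)
  rw [g.apply_tsum_iterate hx, map_sub] at h
  exact eq_add_of_sub_eq' h

theorem exists_ne_zero_isFixedPt_of_summable_orbits {f g : X →L[R] X}
    (hfg : Function.LeftInverse f g) {M N : Submodule R X} (hMc : IsClosed (M : Set X))
    (hNc : IsClosed (N : Set X)) (hMN : Disjoint M N) (hM : Set.MapsTo f M M)
    (hN : Set.MapsTo g N N) {y w : X} (hy : y ≠ 0) (hyM : y ∈ M) (hwN : w ∈ N) (hwy : f w = y)
    (hfy : Summable fun n => f^[n] y) (hgw : Summable fun n => g^[n] w) :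
    ∃ z ≠ 0, Function.IsFixedPt f z := by
  have hfa := f.apply_tsum_iterate hfy
  have hfb := f.apply_tsum_iterate_of_leftInverse hfg hgw
  refine ⟨∑' n, f^[n] y + ∑' n, g^[n] w, fun h0 => hy ?_, ?_⟩
  · have ha : ∑' n, f^[n] y = 0 := by
      refine (Submodule.disjoint_def.mp hMN) _ (tsum_mem hMc fun n => hM.iterate n hyM) ?_
      rw [eq_neg_of_add_eq_zero_left h0]
      exact N.neg_mem (tsum_mem hNc fun n => hN.iterate n hwN)
    simpa [ha] using hfa
  · rw [Function.IsFixedPt, map_add, hfa, hfb, hwy]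
    abel

end OrbitSums

theorem exists_ne_zero_isFixedPt_iterate_of_spectrum_subset_ball {X : Type*}
    [NormedAddCommGroup X] [NormedSpace ℂ X] [CompleteSpace X]
    (T : X ≃L[ℂ] X) (M N : Submodule ℂ X)
    (hMc : IsClosed (M : Set X)) (hNc : IsClosed (N : Set X)) (hMN : Disjoint M N)
    (hM : ∀ x ∈ M, T x ∈ M) (hN : ∀ x ∈ N, T.symm x ∈ N)
    (hsM : spectrum ℂ (restrictOp (T : X →L[ℂ] X) M hM) ⊆ Metric.ball (0 : ℂ) 1)
    (hsN : spectrum ℂ (restrictOp (T.symm : X →L[ℂ] X) N hN) ⊆ Metric.ball (0 : ℂ) 1)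
    {y : X} (hy : y ≠ 0) (hyM : y ∈ M) (hyTN : y ∈ T '' N) (p : ℕ) :
    ∃ z ≠ 0, Function.IsFixedPt (⇑T)^[p + 1] z := by
  obtain ⟨w, hwN, rfl⟩ := hyTN
  have hcoe : ∀ (e : X ≃L[ℂ] X) (n : ℕ),
      (⇑((e : X →L[ℂ] X) ^ (p + 1)))^[n] = (⇑e)^[(p + 1) * n] := fun e n => by
    rw [FunLike.coe_pow_eq_iterate, ContinuousLinearEquiv.coe_coe, Function.iterate_mul]
  have hinj : ∀ j, Function.Injective fun n : ℕ => (p + 1) * n + j := fun j a b hab => by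
    simpa using hab
  have hTT : Function.LeftInverse T T.symm := T.apply_symm_apply
  have hw : (⇑T)^[p + 1] ((⇑T.symm)^[p] w) = T w := by
    rw [Function.iterate_succ_apply', hTT.iterate p]
  have hfy : Summable fun n => (⇑((T : X →L[ℂ] X) ^ (p + 1)))^[n] (T w) := by
    simp_rw [hcoe]
    exact ((summable_norm_iterate_of_spectrum_restrictOp_subset_ball _ hMc hM hsM hyM)
      |>.comp_injective (hinj 0)).of_norm
  have hgw : Summable fun n => (⇑((T.symm : X →L[ℂ] X) ^ (p + 1)))^[n] ((⇑T.symm)^[p] w) := by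
    simp_rw [hcoe, ← Function.iterate_add_apply]
    exact ((summable_norm_iterate_of_spectrum_restrictOp_subset_ball _ hNc hN hsN hwN)
      |>.comp_injective (hinj p)).of_norm
  obtain ⟨z, hz, hfz⟩ := exists_ne_zero_isFixedPt_of_summable_orbits
    (f := (T : X →L[ℂ] X) ^ (p + 1)) (g := (T.symm : X →L[ℂ] X) ^ (p + 1))
    (by simpa [FunLike.coe_pow_eq_iterate] using hTT.iterate (p + 1)) hMc hNc hMN
    (by simpa [FunLike.coe_pow_eq_iterate] using Set.MapsTo.iterate hM (p + 1))
    (by simpa [FunLike.coe_pow_eq_iterate] using Set.MapsTo.iterate hN (p + 1))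
    hy hyM (Set.MapsTo.iterate hN p hwN) (by simpa [FunLike.coe_pow_eq_iterate] using hw) hfy hgw
  refine ⟨z, hz, ?_⟩
  rwa [FunLike.coe_pow_eq_iterate, ContinuousLinearEquiv.coe_coe] at hfz

section Conjugacy

variable {X : Type*}

theorem conj_addRight_trans_of_commute [AddGroup X] [TopologicalSpace X]
    [SeparatelyContinuousAdd X] {S P : X → X} {h : X ≃ₜ X}
    (hconj : ∀ x, S x = h (P (h.symm x))) {v : X} (hv : Function.Commute P (· + v)) (x : X) :
    S x = (Homeomorph.addRight v).trans h (P (((Homeomorph.addRight v).trans h).symm x)) := by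
  have hPv : P (h.symm x + -v) + v = P (h.symm x) := by
    simpa using (hv (h.symm x + -v)).symm
  simp [Homeomorph.trans_apply, Homeomorph.addRight_symm, hPv, hconj]

theorem norm_addRight_trans_apply_sub_le [SeminormedAddCommGroup X] {h : X ≃ₜ X} {c : ℝ}
    (hc : ∀ x, ‖h x - x‖ ≤ c) (v x : X) :
    ‖(Homeomorph.addRight v).trans h x - x‖ ≤ c + ‖v‖ :=
  calc ‖(Homeomorph.addRight v).trans h x - x‖ = ‖(h (x + v) - (x + v)) + v‖ := by
        rw [sub_add, add_sub_cancel_right]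
        rfl
    _ ≤ c + ‖v‖ := (norm_add_le _ _).trans (add_le_add_left (hc _) _)

theorem not_countable_setOf_conj_supNormLt [NormedAddCommGroup X] [NormedSpace ℝ X]
    {S P : X → X} {h : X ≃ₜ X} (hconj : ∀ x, S x = h (P (h.symm x))) {z : X} (hz : z ≠ 0)
    (hPz : ∀ t : ℝ, Function.Commute P (· + t • z)) {δ : ℝ}
    (hδ : SupNormLt (fun x => h x - x) δ) :
    ¬ {g : X ≃ₜ X | (∀ x, S x = g (P (g.symm x))) ∧ SupNormLt (fun x => g x - x) δ}.Countable := by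
  obtain ⟨c, hcδ, hc⟩ := hδ
  set G : ℝ → X ≃ₜ X := fun t => (Homeomorph.addRight (t • z)).trans h
  have hG : Function.Injective G := fun s t hst => by
    have := congrArg (fun g : X ≃ₜ X => h.symm (g 0)) hst
    simpa [G, Homeomorph.trans_apply, smul_left_injective ℝ hz |>.eq_iff] using this
  have hε : 0 < (δ - c) / ‖z‖ := div_pos (sub_pos.mpr hcδ) (norm_pos_iff.mpr hz)
  have hmaps : Set.MapsTo G (Set.Ioo 0 ((δ - c) / ‖z‖))
      {g : X ≃ₜ X | (∀ x, S x = g (P (g.symm x))) ∧ SupNormLt (fun x => g x - x) δ} := by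
    rintro t ⟨ht0, htε⟩
    refine ⟨conj_addRight_trans_of_commute hconj (hPz t), c + ‖t • z‖, ?_,
      norm_addRight_trans_apply_sub_le hc _⟩
    rw [norm_smul, Real.norm_of_nonneg ht0.le, ← lt_sub_iff_add_lt']
    exact (lt_div_iff₀ (norm_pos_iff.mpr hz)).mp htε
  intro hcount
  exact hε.not_ge (by simpa using hmaps.countable_of_injOn hG.injOn hcount)

end Conjugacy

/-- If `T` is a generalized hyperbolic operator whose splitting `X = M ⊕ N` admits a nonzero
vector `y ∈ M ∩ T(N)`, then a conjugating homeomorphism at bounded distance from the identity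
is never unique: there are uncountably many such homeomorphisms, and the same holds under the
restriction `‖g - I‖_∞ < δ`. -/
theorem genHyperbolic_nonunique_conjugacy
    {X : Type*} [NormedAddCommGroup X] [NormedSpace ℂ X] [CompleteSpace X]
    (T : X ≃L[ℂ] X) (M N : Submodule ℂ X)
    (hMc : IsClosed (M : Set X)) (hNc : IsClosed (N : Set X)) (hcompl : IsCompl M N)
    (hM : ∀ x ∈ M, T x ∈ M) (hN : ∀ x ∈ N, T.symm x ∈ N)
    (hsM : spectrum ℂ (restrictOp (T : X →L[ℂ] X) M hM) ⊆ Metric.ball (0 : ℂ) 1)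
    (hsN : spectrum ℂ (restrictOp (T.symm : X →L[ℂ] X) N hN) ⊆ Metric.ball (0 : ℂ) 1)
    (y : X) (hy : y ≠ 0) (hyM : y ∈ M) (hyTN : y ∈ (fun x => T x) '' (N : Set X))
    (p : ℕ) (S : X → X) (h : X ≃ₜ X)
    (hconj : ∀ x : X, S x = h ((⇑T)^[p + 1] (h.symm x)))
    (hbd : BoundedMap (fun x : X => h x - x)) :
    ¬ Set.Countable {g : X ≃ₜ X | (∀ x : X, S x = g ((⇑T)^[p + 1] (g.symm x))) ∧
        BoundedMap (fun x : X => g x - x)} ∧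
    ∀ δ > (0 : ℝ), SupNormLt (fun x : X => h x - x) δ →
      ¬ Set.Countable {g : X ≃ₜ X | (∀ x : X, S x = g ((⇑T)^[p + 1] (g.symm x))) ∧
          SupNormLt (fun x : X => g x - x) δ} := by
  obtain ⟨z, hz, hfix⟩ := exists_ne_zero_isFixedPt_iterate_of_spectrum_subset_ball T M N hMc hNc
    hcompl.disjoint hM hN hsM hsN hy hyM hyTN p
  have hcomm : ∀ t : ℝ, Function.Commute (⇑T)^[p + 1] (· + t • z) := fun t x => by
    simp only [← ContinuousLinearEquiv.coe_coe, ← FunLike.coe_pow_eq_iterate] at hfix ⊢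
    rw [map_add, ContinuousLinearMap.map_smul_of_tower, hfix.eq]
  have hnc := fun δ => not_countable_setOf_conj_supNormLt (δ := δ) hconj hz hcomm
  obtain ⟨C, hC⟩ := hbd
  refine ⟨fun hcount => hnc (C + 1) ⟨C, lt_add_one C, hC⟩ (hcount.mono ?_), fun δ _ => hnc δ⟩
  rintro g ⟨hg, c, -, hc⟩
  exact ⟨hg, c, hc⟩
end
end

section
/- Let X be a real or complex Banach space, T an invertible bounded linear operator on X, and M, N closed subspaces with X = M ⊕ N (topological direct sum), T(M) ⊆ M and T⁻¹(N) ⊆ N; assume there are constants a ≥ 1 and t ∈ (0,1) such that ‖Tⁿ(y)‖ ≤ a tⁿ ‖y‖ and ‖T⁻ⁿ(z)‖ ≤ a tⁿ ‖z‖ for all integers n ≥ 0, y ∈ M, z ∈ N, and set Y = M + T⁻¹(N). Let p ∈ ℕ, let R₀,…,R_{p−1} : X → X be homeomorphisms, and let f₀,…,f_{p−1} : X → X be continuous bounded maps with f_j(X) ⊆ Y for all j. If f_{j+1}(R_j(x)) = T(f_j(x)) for all x ∈ X and all j (indices taken mod p), then f_j(x) = 0 for all j and all x ∈ X. -/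
noncomputable section

/-- Injectivity of the operator `F ↦ F ∘ R - T ∘ F`: if `f₀, …, f_{p-1}` are continuous
bounded maps with values in `Y = M + T⁻¹(N)` satisfying `f_{j+1} ∘ R_j = T ∘ f_j`
(indices mod `p`), where the `R_j` are homeomorphisms of `X`, then all `f_j` vanish. -/
theorem invariant_equation_injectivity
    {𝕜 X : Type*} [RCLike 𝕜] [NormedAddCommGroup X] [NormedSpace 𝕜 X] [CompleteSpace X]
    (T : X ≃L[𝕜] X) (M N : Submodule 𝕜 X)
    (hMc : IsClosed (M : Set X)) (hNc : IsClosed (N : Set X)) (hcompl : IsCompl M N)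
    (hM : ∀ x ∈ M, T x ∈ M) (hN : ∀ x ∈ N, T.symm x ∈ N)
    (a t : ℝ) (ha : 1 ≤ a) (ht : t ∈ Set.Ioo (0 : ℝ) 1)
    (hMbound : ∀ (n : ℕ), ∀ y ∈ M, ‖(⇑T)^[n] y‖ ≤ a * t ^ n * ‖y‖)
    (hNbound : ∀ (n : ℕ), ∀ z ∈ N, ‖(⇑T.symm)^[n] z‖ ≤ a * t ^ n * ‖z‖)
    (p : ℕ) (R : Fin (p + 1) → X ≃ₜ X) (f : Fin (p + 1) → X → X)
    (hfc : ∀ j, Continuous (f j)) (hfb : ∀ j, BoundedMap (f j))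
    (hfY : ∀ j x, f j x ∈ M ⊔ Submodule.comap ((T : X →L[𝕜] X) : X →ₗ[𝕜] X) N)
    (hfe : ∀ j x, f (j + 1) (R j x) = T (f j x)) :
    ∀ j x, f j x = 0 := by
  obtain ⟨ht0, ht1⟩ := ht
  -- a uniform bound on all the `f j`
  choose Cf hCf using hfb
  set C : ℝ := Finset.univ.sup' Finset.univ_nonempty Cf with hC
  have hCb : ∀ j x, ‖f j x‖ ≤ C := fun j x =>
    (hCf j x).trans (Finset.le_sup' Cf (Finset.mem_univ j))
  have hC0 : (0 : ℝ) ≤ C := le_trans (norm_nonneg _) (hCb 0 0)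
  -- the set of all values
  set S : Set X := ⋃ j, Set.range (f j) with hSdef
  have hmemS : ∀ j x, f j x ∈ S := fun j x => Set.mem_iUnion.2 ⟨j, ⟨x, rfl⟩⟩
  have hSb : ∀ v ∈ S, ‖v‖ ≤ C := by
    rintro v hv
    obtain ⟨j, ⟨x, rfl⟩⟩ := Set.mem_iUnion.1 hv
    exact hCb j x
  have hST : ∀ v ∈ S, T v ∈ S := by
    rintro v hv
    obtain ⟨j, ⟨x, rfl⟩⟩ := Set.mem_iUnion.1 hv
    rw [← hfe j x]
    exact hmemS _ _
  have hSTi : ∀ v ∈ S, T.symm v ∈ S := by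
    rintro v hv
    obtain ⟨j, ⟨x, rfl⟩⟩ := Set.mem_iUnion.1 hv
    have h1 := hfe (j - 1) ((R (j - 1)).symm x)
    rw [sub_add_cancel, Homeomorph.apply_symm_apply] at h1
    rw [h1, ContinuousLinearEquiv.symm_apply_apply]
    exact hmemS _ _
  have hSY : ∀ v ∈ S, ∃ m w, m ∈ M ∧ T w ∈ N ∧ v = m + w := by
    rintro v hv
    obtain ⟨j, ⟨x, rfl⟩⟩ := Set.mem_iUnion.1 hv
    obtain ⟨m, hm, w, hw, hmw⟩ := Submodule.mem_sup.1 (hfY j x)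
    exact ⟨m, w, hm, hw, hmw.symm⟩
  -- iterated membership
  have hSTk : ∀ k, ∀ v ∈ S, (⇑T)^[k] v ∈ S := by
    intro k
    induction k with
    | zero => intro v hv; exact hv
    | succ k ih =>
      intro v hv
      rw [Function.iterate_succ_apply]
      exact ih _ (hST v hv)
  have hSTik : ∀ k, ∀ v ∈ S, (⇑T.symm)^[k] v ∈ S := by
    intro k
    induction k with
    | zero => intro v hv; exact hv
    | succ k ih =>
      intro v hv
      rw [Function.iterate_succ_apply]
      exact ih _ (hSTi v hv)
  -- the continuous projection onto N along M
  set Q : X →L[𝕜] X :=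
    N.subtypeL.comp (N.linearProjOfClosedCompl M hcompl.symm hNc hMc) with hQdef
  have hQN : ∀ z ∈ N, Q z = z := by
    intro z hz
    have := Submodule.linearProjOfIsCompl_apply_left hcompl.symm ⟨z, hz⟩
    simp only [hQdef, ContinuousLinearMap.comp_apply,
      Submodule.coe_continuous_linearProjOfClosedCompl', Submodule.subtypeL_apply]
    rw [this]
  have hQM : ∀ y ∈ M, Q y = 0 := by
    intro y hy
    have := Submodule.linearProjOfIsCompl_apply_right hcompl.symm ⟨y, hy⟩
    simp only [hQdef, ContinuousLinearMap.comp_apply,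
      Submodule.coe_continuous_linearProjOfClosedCompl', Submodule.subtypeL_apply]
    rw [this, Submodule.coe_zero]
  have hQmem : ∀ x, Q x ∈ N := by
    intro x
    simp only [hQdef, ContinuousLinearMap.comp_apply, Submodule.subtypeL_apply]
    exact Submodule.coe_mem _
  -- key computation: for v ∈ S, Q (T v) = T w where v = m + w is the Y-decomposition
  have hQT : ∀ v m w, m ∈ M → T w ∈ N → v = m + w → Q (T v) = T w := by
    intro v m w hm hw hv
    have : T v = T m + T w := by rw [hv, map_add]
    rw [this, map_add, hQM _ (hM m hm), hQN _ hw, zero_add]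
  -- the one-step recursion
  have hkey : ∀ v ∈ S, Q (T v) = T.symm (Q (T (T v))) := by
    intro v hv
    obtain ⟨m, w, hm, hw, hvd⟩ := hSY v hv
    obtain ⟨m', w', hm', hw', hvd'⟩ := hSY (T v) (hST v hv)
    rw [hQT v m w hm hw hvd, hQT (T v) m' w' hm' hw' hvd']
    -- T v = T m + T w = m' + w', so T w - w' ∈ M ∩ N = 0
    have hTv : T m + T w = m' + w' := by rw [← map_add, ← hvd, hvd']
    have hdiff : T w - w' = m' - T m := by
      rw [sub_eq_sub_iff_add_eq_add, add_comm]
      exact hTv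
    have hw'N : w' ∈ N := by
      have := hN _ hw'
      rwa [ContinuousLinearEquiv.symm_apply_apply] at this
    have hmemM : T w - w' ∈ M := hdiff ▸ M.sub_mem hm' (hM m hm)
    have hmemN : T w - w' ∈ N := N.sub_mem hw hw'N
    have h0 : T w - w' = 0 := Submodule.disjoint_def.1 hcompl.disjoint _ hmemM hmemN
    have hww : T w = w' := sub_eq_zero.1 h0
    rw [ContinuousLinearEquiv.symm_apply_apply]
    exact hww
  -- iterate the recursion
  have hiter : ∀ k, ∀ v ∈ S, Q (T v) = (⇑T.symm)^[k] (Q (T ((⇑T)^[k] v))) := by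
    intro k
    induction k with
    | zero => intro v hv; rfl
    | succ k ih =>
      intro v hv
      rw [hkey v hv, ih (T v) (hST v hv), ← Function.iterate_succ_apply' (⇑T.symm),
        Function.iterate_succ_apply (⇑T)]
  -- a uniform bound on Q (T w) for w ∈ S
  set D : ℝ := ‖Q‖ * (‖(T : X →L[𝕜] X)‖ * C) with hD
  have hDb : ∀ v ∈ S, ‖Q (T v)‖ ≤ D := by
    intro v hv
    calc ‖Q (T v)‖ ≤ ‖Q‖ * ‖T v‖ := Q.le_opNorm _
      _ ≤ ‖Q‖ * (‖(T : X →L[𝕜] X)‖ * ‖v‖) := by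
          gcongr
          exact (T : X →L[𝕜] X).le_opNorm v
      _ ≤ D := by
          rw [hD]
          gcongr
          exact hSb v hv
  -- hence Q (T v) = 0 for all v ∈ S
  have hQ0 : ∀ v ∈ S, Q (T v) = 0 := by
    intro v hv
    have hle : ∀ k : ℕ, ‖Q (T v)‖ ≤ a * t ^ k * D := by
      intro k
      rw [hiter k v hv]
      calc ‖(⇑T.symm)^[k] (Q (T ((⇑T)^[k] v)))‖
          ≤ a * t ^ k * ‖Q (T ((⇑T)^[k] v))‖ :=
            hNbound k _ (hQmem _)
        _ ≤ a * t ^ k * D := by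
            gcongr
            exact hDb _ (hSTk k v hv)
    have htend : Filter.Tendsto (fun k : ℕ => a * t ^ k * D) Filter.atTop (nhds 0) := by
      have h1 : Filter.Tendsto (fun k : ℕ => t ^ k) Filter.atTop (nhds 0) :=
        tendsto_pow_atTop_nhds_zero_of_lt_one ht0.le ht1
      have := (h1.const_mul a).mul_const D
      simpa using this
    have : ‖Q (T v)‖ ≤ 0 := ge_of_tendsto' htend hle
    have : ‖Q (T v)‖ = 0 := le_antisymm this (norm_nonneg _)
    exact norm_eq_zero.1 this
  -- hence S ⊆ M
  have hSM : ∀ v ∈ S, v ∈ M := by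
    intro v hv
    obtain ⟨m, w, hm, hw, hvd⟩ := hSY v hv
    have h1 : T w = 0 := by rw [← hQT v m w hm hw hvd]; exact hQ0 v hv
    have h2 : w = 0 := by
      have := congrArg T.symm h1
      rwa [ContinuousLinearEquiv.symm_apply_apply, map_zero] at this
    rw [hvd, h2, add_zero]
    exact hm
  -- finally, S = {0} by the contraction on M
  have hS0 : ∀ v ∈ S, v = 0 := by
    intro v hv
    have hle : ∀ k : ℕ, ‖v‖ ≤ a * t ^ k * C := by
      intro k
      have hvk : (⇑T.symm)^[k] v ∈ S := hSTik k v hv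
      have hid : (⇑T)^[k] ((⇑T.symm)^[k] v) = v :=
        (Function.LeftInverse.iterate T.apply_symm_apply k) v
      calc ‖v‖ = ‖(⇑T)^[k] ((⇑T.symm)^[k] v)‖ := by rw [hid]
        _ ≤ a * t ^ k * ‖(⇑T.symm)^[k] v‖ := hMbound k _ (hSM _ hvk)
        _ ≤ a * t ^ k * C := by
            gcongr
            exact hSb _ hvk
    have htend : Filter.Tendsto (fun k : ℕ => a * t ^ k * C) Filter.atTop (nhds 0) := by
      have h1 : Filter.Tendsto (fun k : ℕ => t ^ k) Filter.atTop (nhds 0) :=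
        tendsto_pow_atTop_nhds_zero_of_lt_one ht0.le ht1
      have := (h1.const_mul a).mul_const C
      simpa using this
    have h2 : ‖v‖ ≤ 0 := ge_of_tendsto' htend hle
    exact norm_eq_zero.1 (le_antisymm h2 (norm_nonneg _))
  intro j x
  exact hS0 _ (hmemS j x)
end
end

section
/- Let X be a real or complex Banach space, T an invertible bounded linear operator on X, and M, N closed subspaces with X = M ⊕ N (topological direct sum), T(M) ⊆ M and T⁻¹(N) ⊆ N; assume there are constants a ≥ 1 and t ∈ (0,1) such that ‖Tⁿ(y)‖ ≤ a tⁿ ‖y‖ and ‖T⁻ⁿ(z)‖ ≤ a tⁿ ‖z‖ for all integers n ≥ 0, y ∈ M, z ∈ N. Let P_M, P_N be the bounded projections associated with X = M ⊕ N, b = max(‖P_M‖, ‖P_N‖), and Y = M + T⁻¹(N). Let p ∈ ℕ and let R₀,…,R_{p−1} : X → X be homeomorphisms. Then for every family g₀,…,g_{p−1} : X → X of continuous bounded maps there exists a unique family f₀,…,f_{p−1} : X → X of continuous bounded maps with f_j(X) ⊆ Y for all j and f_{j+1}(R_j(x)) − T(f_j(x)) = g_j(x) for all x ∈ X and all j (indices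 mod p); moreover this unique family satisfies max_j sup_{x∈X} ‖f_j(x)‖ ≤ (a·b·(1+t)/(1−t)) · max_j sup_{x∈X} ‖g_j(x)‖. -/
/-!
Encode the family `(f_j)` as one map `F` on `Fin (p + 1) × X`: the equations become
`F ∘ ρ - T ∘ F = G` for the skew product `ρ (j, x) = (j + 1, R_j x)`. Since `T` contracts on `M`
and `T⁻¹` contracts on `N`, the solution is `F = u + v` with the Neumann series
`u = ∑ Tⁿ ∘ P_M ∘ G ∘ ρ⁻ⁿ⁻¹` and `v = -∑ T⁻ⁿ⁻¹ ∘ P_N ∘ G ∘ ρⁿ`, whose geometric bounds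
`a b C / (1 - t)` and `a b t C / (1 - t)`, with `C = sup ‖G‖`, add up to the bound of the
theorem. For uniqueness, `P_M` and `P_N` commute with `T` on `M + T⁻¹(N)`, so the two components
of a bounded solution `D` of `D ∘ ρ = T ∘ D` are iterates `Tⁿ` on `M`, resp. `T⁻ⁿ` on `N`, of
bounded vectors, hence vanish.
-/

noncomputable section

section BoundedMap

theorem BoundedMap.uncurry {ι α Y : Type*} [Norm Y] [Finite ι] {f : ι → α → Y}
    (hf : ∀ i, BoundedMap (f i)) : BoundedMap (Function.uncurry f) := by
  choose C hC using hf
  obtain ⟨B, hB⟩ := (Set.finite_range C).bddAbove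
  exact ⟨B, fun z => (hC z.1 z.2).trans (hB ⟨z.1, rfl⟩)⟩

theorem norm_le_iSup_iSup_norm {ι α Y : Type*} [Norm Y] [Finite ι] {f : ι → α → Y}
    (hf : ∀ i, BoundedMap (f i)) (i : ι) (x : α) : ‖f i x‖ ≤ ⨆ i, ⨆ x, ‖f i x‖ := by
  have hbdd (i : ι) : BddAbove (Set.range fun x => ‖f i x‖) :=
    let ⟨C, hC⟩ := hf i; ⟨C, Set.forall_mem_range.mpr hC⟩
  exact (le_ciSup (hbdd i) x).trans
    (le_ciSup (f := fun i => ⨆ x, ‖f i x‖) (Set.finite_range _).bddAbove i)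

variable {𝕜 X Y Z : Type*} [NontriviallyNormedField 𝕜] [NormedAddCommGroup X] [NormedSpace 𝕜 X]
  [NormedAddCommGroup Y] [NormedSpace 𝕜 Y]

theorem BoundedMap.clm_comp {F : Z → X} (hF : BoundedMap F) (L : X →L[𝕜] Y) :
    BoundedMap (L ∘ F) := by
  obtain ⟨C, hC⟩ := hF
  exact ⟨‖L‖ * C, fun z => (L.le_opNorm _).trans (by gcongr; exact hC z)⟩

theorem BoundedMap.sub {F F' : Z → X} (hF : BoundedMap F) (hF' : BoundedMap F') :
    BoundedMap (F - F') := by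
  obtain ⟨C, hC⟩ := hF
  obtain ⟨C', hC'⟩ := hF'
  exact ⟨C + C', fun z => (norm_sub_le _ _).trans (add_le_add (hC z) (hC' z))⟩

end BoundedMap

def skewProduct {ι X : Type*} [TopologicalSpace ι] [DiscreteTopology ι] [TopologicalSpace X]
    (e : ι ≃ ι) (R : ι → X ≃ₜ X) : ι × X ≃ₜ ι × X where
  toEquiv := e.prodShear fun i => (R i).toEquiv
  continuous_toFun := continuous_prod_of_discrete_left.mpr fun i =>
    (continuous_const (y := e i)).prodMk (R i).continuous
  continuous_invFun := continuous_prod_of_discrete_left.mpr fun i =>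
    (continuous_const (y := e.symm i)).prodMk (R (e.symm i)).symm.continuous

namespace InvariantEquation

open Function Filter Topology

section Neumann

variable {𝕜 X Z : Type*} [NormedField 𝕜] [NormedAddCommGroup X] [NormedSpace 𝕜 X]

/-- The Neumann series `∑ Lⁿ H` of the operator `L F = A ∘ F ∘ σ`; it solves
`F = H + A ∘ F ∘ σ`. -/
def neumannSeries (A : X →L[𝕜] X) (σ : Z → Z) (H : Z → X) (z : Z) : X :=
  ∑' n, A^[n] (H (σ^[n] z))

variable {A : X →L[𝕜] X} {σ : Z → Z} {H : Z → X} {C t : ℝ}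

theorem summable_neumannSeries [CompleteSpace X] (ht0 : 0 ≤ t) (ht1 : t < 1)
    (hAH : ∀ n z, ‖A^[n] (H z)‖ ≤ C * t ^ n) (z : Z) :
    Summable fun n => A^[n] (H (σ^[n] z)) :=
  .of_norm_bounded ((summable_geometric_of_lt_one ht0 ht1).mul_left C) fun n => hAH n _

theorem norm_neumannSeries_le (ht0 : 0 ≤ t) (ht1 : t < 1)
    (hAH : ∀ n z, ‖A^[n] (H z)‖ ≤ C * t ^ n) (z : Z) :
    ‖neumannSeries A σ H z‖ ≤ C / (1 - t) := by
  have hgeom := ((hasSum_geometric_of_lt_one ht0 ht1).mul_left C)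
  rw [div_eq_mul_inv]
  exact tsum_of_norm_bounded hgeom fun n => hAH n _

theorem neumannSeries_eq [CompleteSpace X] (ht0 : 0 ≤ t) (ht1 : t < 1)
    (hAH : ∀ n z, ‖A^[n] (H z)‖ ≤ C * t ^ n) (z : Z) :
    neumannSeries A σ H z = H z + A (neumannSeries A σ H (σ z)) := by
  unfold neumannSeries
  rw [(summable_neumannSeries ht0 ht1 hAH z).tsum_eq_zero_add,
    A.map_tsum (summable_neumannSeries ht0 ht1 hAH (σ z))]
  simp only [iterate_zero_apply, iterate_succ_apply σ, iterate_succ_apply' A]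

theorem continuous_neumannSeries [CompleteSpace X] [TopologicalSpace Z] (ht0 : 0 ≤ t)
    (ht1 : t < 1) (hAH : ∀ n z, ‖A^[n] (H z)‖ ≤ C * t ^ n) (hσ : Continuous σ)
    (hH : Continuous H) :
    Continuous (neumannSeries A σ H) :=
  continuous_tsum (fun n => (A.continuous.iterate n).comp (hH.comp (hσ.iterate n)))
    ((summable_geometric_of_lt_one ht0 ht1).mul_left C) fun n _ => hAH n _

theorem neumannSeries_mem {K : Submodule 𝕜 X} (hK : IsClosed (K : Set X)) (hA : Set.MapsTo A K K)
    (hHK : ∀ z, H z ∈ K) (z : Z) : neumannSeries A σ H z ∈ K :=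
  tsum_mem hK fun n => hA.iterate n (hHK _)

end Neumann

section Solutions

variable {𝕜 X Z : Type*} [NormedField 𝕜] [NormedAddCommGroup X] [NormedSpace 𝕜 X]
  [CompleteSpace X] [TopologicalSpace Z] {K : Submodule 𝕜 X} {a t C : ℝ}

theorem exists_solution_of_contracting {A : X →L[𝕜] X} (hK : IsClosed (K : Set X))
    (hAK : Set.MapsTo A K K) (ha : 0 ≤ a) (ht0 : 0 ≤ t) (ht1 : t < 1)
    (hA : ∀ n, ∀ y ∈ K, ‖A^[n] y‖ ≤ a * t ^ n * ‖y‖) (ρ : Z ≃ₜ Z) {H : Z → X}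
    (hHc : Continuous H) (hHK : ∀ z, H z ∈ K) (hHC : ∀ z, ‖H z‖ ≤ C) :
    ∃ u : Z → X, Continuous u ∧ (∀ z, ‖u z‖ ≤ a * C / (1 - t)) ∧ (∀ z, u z ∈ K) ∧
      ∀ z, u (ρ z) = A (u z) + H z := by
  have hAH : ∀ n z, ‖A^[n] (H (ρ.symm z))‖ ≤ a * C * t ^ n := fun n z =>
    calc ‖A^[n] (H (ρ.symm z))‖ ≤ a * t ^ n * ‖H (ρ.symm z)‖ := hA n _ (hHK _)
      _ ≤ a * t ^ n * C := by gcongr; exact hHC _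
      _ = a * C * t ^ n := by ring
  refine ⟨neumannSeries A ρ.symm (fun z => H (ρ.symm z)),
    continuous_neumannSeries ht0 ht1 hAH ρ.symm.continuous (hHc.comp ρ.symm.continuous),
    norm_neumannSeries_le ht0 ht1 hAH, neumannSeries_mem hK hAK fun _ => hHK _, fun z => ?_⟩
  rw [neumannSeries_eq ht0 ht1 hAH (ρ z), ρ.symm_apply_apply, add_comm]

theorem exists_solution_of_expanding (T : X ≃L[𝕜] X) (hK : IsClosed (K : Set X))
    (hTK : Set.MapsTo T.symm K K) (ha : 0 ≤ a) (ht0 : 0 ≤ t) (ht1 : t < 1)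
    (hT : ∀ n, ∀ y ∈ K, ‖(⇑T.symm)^[n] y‖ ≤ a * t ^ n * ‖y‖) (ρ : Z ≃ₜ Z) {H : Z → X}
    (hHc : Continuous H) (hHK : ∀ z, H z ∈ K) (hHC : ∀ z, ‖H z‖ ≤ C) :
    ∃ v : Z → X, Continuous v ∧ (∀ z, ‖v z‖ ≤ a * t * C / (1 - t)) ∧ (∀ z, v z ∈ K) ∧
      ∀ z, v (ρ z) = T (v z) + H z := by
  let A : X →L[𝕜] X := T.symm
  have hAH : ∀ n z, ‖A^[n] (-T.symm (H z))‖ ≤ a * t * C * t ^ n := fun n z =>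
    calc ‖A^[n] (-T.symm (H z))‖ = ‖(⇑T.symm)^[n + 1] (H z)‖ := by
          rw [iterate_map_neg, norm_neg, iterate_succ_apply]; rfl
      _ ≤ a * t ^ (n + 1) * ‖H z‖ := hT _ _ (hHK z)
      _ ≤ a * t ^ (n + 1) * C := by gcongr; exact hHC z
      _ = a * t * C * t ^ n := by ring
  refine ⟨neumannSeries A ρ (fun z => -T.symm (H z)),
    continuous_neumannSeries ht0 ht1 hAH ρ.continuous (T.symm.continuous.comp hHc).neg,
    norm_neumannSeries_le ht0 ht1 hAH, neumannSeries_mem hK hTK fun _ => K.neg_mem (hTK (hHK _)),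
    fun z => ?_⟩
  rw [neumannSeries_eq ht0 ht1 hAH z, map_add, map_neg]
  simp only [A, ContinuousLinearEquiv.coe_coe, ContinuousLinearEquiv.apply_symm_apply]
  abel

end Solutions

section Projections

variable {R X : Type*} [Ring R] [AddCommGroup X] [Module R X] {M N : Submodule R X}
  {P Q : X → X}

theorem proj_add_eq_left (hMN : Disjoint M N) (hP : ∀ x, P x ∈ M) (hQ : ∀ x, Q x ∈ N)
    (hPQ : ∀ x, P x + Q x = x) {m n : X} (hm : m ∈ M) (hn : n ∈ N) : P (m + n) = m := by
  have h : P (m + n) - m = n - Q (m + n) := by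
    rw [sub_eq_sub_iff_add_eq_add, hPQ, add_comm]
  exact sub_eq_zero.mp <| Submodule.disjoint_def.mp hMN _ (M.sub_mem (hP _) hm)
    (h ▸ N.sub_mem hn (hQ _))

theorem proj_add_eq_right (hMN : Disjoint M N) (hP : ∀ x, P x ∈ M) (hQ : ∀ x, Q x ∈ N)
    (hPQ : ∀ x, P x + Q x = x) {m n : X} (hm : m ∈ M) (hn : n ∈ N) : Q (m + n) = n := by
  rw [add_comm]
  exact proj_add_eq_left hMN.symm hQ hP (fun x => (add_comm _ _).trans (hPQ x)) hn hm

end Projections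

section Uniqueness

variable {𝕜 X Z : Type*} [NontriviallyNormedField 𝕜] [NormedAddCommGroup X] [NormedSpace 𝕜 X]
  {M N : Submodule 𝕜 X} {a t : ℝ}

theorem eq_zero_of_semiconj {ρ : Z → Z} (hρ : Surjective ρ) {A : X → X} {K : Set X}
    (ha : 0 ≤ a) (ht0 : 0 ≤ t) (ht1 : t < 1) (hA : ∀ n, ∀ y ∈ K, ‖A^[n] y‖ ≤ a * t ^ n * ‖y‖)
    {E : Z → X} (hE : BoundedMap E) (hEK : ∀ z, E z ∈ K) (hEA : Semiconj E ρ A) (z : Z) :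
    E z = 0 := by
  obtain ⟨C, hC⟩ := hE
  have hbound : ∀ n : ℕ, ‖E z‖ ≤ a * C * t ^ n := by
    intro n
    obtain ⟨y, rfl⟩ := hρ.iterate n z
    calc ‖E (ρ^[n] y)‖ = ‖A^[n] (E y)‖ := by rw [(hEA.iterate_right n).eq]
      _ ≤ a * t ^ n * ‖E y‖ := hA n _ (hEK y)
      _ ≤ a * t ^ n * C := by gcongr; exact hC y
      _ = a * C * t ^ n := by ring
  have hlim : Tendsto (fun n : ℕ => a * C * t ^ n) atTop (𝓝 0) := by
    simpa using (tendsto_pow_atTop_nhds_zero_of_lt_one ht0 ht1).const_mul (a * C)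
  exact norm_le_zero_iff.mp (ge_of_tendsto' hlim hbound)

theorem proj_map_of_mem_sup_comap (T : X ≃L[𝕜] X) (hM : Set.MapsTo T M M)
    (hN : Set.MapsTo T.symm N N) (hMN : Disjoint M N) {PM PN : X → X}
    (hPM : ∀ x, PM x ∈ M) (hPN : ∀ x, PN x ∈ N) (hP : ∀ x, PM x + PN x = x) {w : X}
    (hw : w ∈ M ⊔ Submodule.comap ((T : X →L[𝕜] X) : X →ₗ[𝕜] X) N) :
    PM (T w) = T (PM w) ∧ PN (T w) = T (PN w) := by
  obtain ⟨m, hm, z, hz, rfl⟩ := Submodule.mem_sup.mp hw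
  replace hz : T z ∈ N := hz
  have hzN : z ∈ N := by simpa using hN hz
  rw [map_add, proj_add_eq_left hMN hPM hPN hP (hM hm) hz, proj_add_eq_left hMN hPM hPN hP hm hzN,
    proj_add_eq_right hMN hPM hPN hP (hM hm) hz, proj_add_eq_right hMN hPM hPN hP hm hzN]
  exact ⟨rfl, rfl⟩

theorem eq_zero_of_semiconj_of_mem_sup_comap (T : X ≃L[𝕜] X) (hM : Set.MapsTo T M M)
    (hN : Set.MapsTo T.symm N N) (hMN : Disjoint M N) (ha : 0 ≤ a) (ht0 : 0 ≤ t) (ht1 : t < 1)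
    (hMbound : ∀ (n : ℕ), ∀ y ∈ M, ‖(⇑T)^[n] y‖ ≤ a * t ^ n * ‖y‖)
    (hNbound : ∀ (n : ℕ), ∀ z ∈ N, ‖(⇑T.symm)^[n] z‖ ≤ a * t ^ n * ‖z‖)
    {PM PN : X →L[𝕜] X} (hPM : ∀ x, PM x ∈ M) (hPN : ∀ x, PN x ∈ N) (hP : ∀ x, PM x + PN x = x)
    (ρ : Z ≃ Z) {D : Z → X} (hDb : BoundedMap D)
    (hDY : ∀ z, D z ∈ M ⊔ Submodule.comap ((T : X →L[𝕜] X) : X →ₗ[𝕜] X) N)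
    (hD : Semiconj D ρ T) : D = 0 := by
  have hcomm z := proj_map_of_mem_sup_comap T hM hN hMN hPM hPN hP (hDY z)
  have hMpart : ∀ z, PM (D z) = 0 :=
    eq_zero_of_semiconj ρ.surjective ha ht0 ht1 hMbound (hDb.clm_comp PM) (fun z => hPM _)
      fun z => by simp only [hD.eq, (hcomm z).1]
  have hNpart : ∀ z, PN (D z) = 0 :=
    eq_zero_of_semiconj ρ.symm.surjective ha ht0 ht1 hNbound (hDb.clm_comp PN) (fun z => hPN _)
      fun z => by
        conv_rhs => rw [← ρ.apply_symm_apply z, hD.eq, (hcomm _).2, T.symm_apply_apply]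
  funext z
  rw [← hP (D z), hMpart, hNpart, add_zero, Pi.zero_apply]

theorem eq_of_solution (T : X ≃L[𝕜] X) (hM : Set.MapsTo T M M)
    (hN : Set.MapsTo T.symm N N) (hMN : Disjoint M N) (ha : 0 ≤ a) (ht0 : 0 ≤ t) (ht1 : t < 1)
    (hMbound : ∀ (n : ℕ), ∀ y ∈ M, ‖(⇑T)^[n] y‖ ≤ a * t ^ n * ‖y‖)
    (hNbound : ∀ (n : ℕ), ∀ z ∈ N, ‖(⇑T.symm)^[n] z‖ ≤ a * t ^ n * ‖z‖)
    {PM PN : X →L[𝕜] X} (hPM : ∀ x, PM x ∈ M) (hPN : ∀ x, PN x ∈ N) (hP : ∀ x, PM x + PN x = x)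
    (ρ : Z ≃ Z) {G F F' : Z → X} (hFb : BoundedMap F) (hF'b : BoundedMap F')
    (hFY : ∀ z, F z ∈ M ⊔ Submodule.comap ((T : X →L[𝕜] X) : X →ₗ[𝕜] X) N)
    (hF'Y : ∀ z, F' z ∈ M ⊔ Submodule.comap ((T : X →L[𝕜] X) : X →ₗ[𝕜] X) N)
    (hF : ∀ z, F (ρ z) - T (F z) = G z) (hF' : ∀ z, F' (ρ z) - T (F' z) = G z) : F = F' := by
  refine sub_eq_zero.mp <| eq_zero_of_semiconj_of_mem_sup_comap T hM hN hMN ha ht0 ht1 hMbound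
    hNbound hPM hPN hP ρ (hFb.sub hF'b) (fun z => Submodule.sub_mem _ (hFY z) (hF'Y z)) fun z => ?_
  rw [Pi.sub_apply, Pi.sub_apply, map_sub, sub_eq_sub_iff_sub_eq_sub, hF, hF']

end Uniqueness

section Existence

variable {𝕜 X Z : Type*} [NontriviallyNormedField 𝕜] [NormedAddCommGroup X] [NormedSpace 𝕜 X]
  [CompleteSpace X] [TopologicalSpace Z] {M N : Submodule 𝕜 X} {a t C : ℝ}

theorem exists_solution (T : X ≃L[𝕜] X) (hMc : IsClosed (M : Set X))
    (hNc : IsClosed (N : Set X)) (hM : Set.MapsTo T M M) (hN : Set.MapsTo T.symm N N)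
    (ha : 0 ≤ a) (ht0 : 0 ≤ t) (ht1 : t < 1)
    (hMbound : ∀ (n : ℕ), ∀ y ∈ M, ‖(⇑T)^[n] y‖ ≤ a * t ^ n * ‖y‖)
    (hNbound : ∀ (n : ℕ), ∀ z ∈ N, ‖(⇑T.symm)^[n] z‖ ≤ a * t ^ n * ‖z‖)
    {PM PN : X →L[𝕜] X} (hPM : ∀ x, PM x ∈ M) (hPN : ∀ x, PN x ∈ N) (hP : ∀ x, PM x + PN x = x)
    (ρ : Z ≃ₜ Z) {G : Z → X} (hGc : Continuous G) (hGC : ∀ z, ‖G z‖ ≤ C) :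
    ∃ F : Z → X, Continuous F ∧
      (∀ z, ‖F z‖ ≤ a * max ‖PM‖ ‖PN‖ * (1 + t) / (1 - t) * C) ∧
      (∀ z, F z ∈ M ⊔ Submodule.comap ((T : X →L[𝕜] X) : X →ₗ[𝕜] X) N) ∧
      ∀ z, F (ρ z) - T (F z) = G z := by
  set b := max ‖PM‖ ‖PN‖
  have hproj_le {L : X →L[𝕜] X} (hL : ‖L‖ ≤ b) (z : Z) : ‖L (G z)‖ ≤ b * C :=
    (L.le_opNorm _).trans (mul_le_mul hL (hGC z) (norm_nonneg _) ((norm_nonneg _).trans hL))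
  obtain ⟨u, hu_cont, hu_le, hu_mem, hu_eq⟩ :=
    exists_solution_of_contracting (A := T) hMc hM ha ht0 ht1 hMbound ρ
      (PM.continuous.comp hGc) (fun z => hPM _) (hproj_le (le_max_left _ _))
  obtain ⟨v, hv_cont, hv_le, hv_mem, hv_eq⟩ :=
    exists_solution_of_expanding T hNc hN ha ht0 ht1 hNbound ρ
      (PN.continuous.comp hGc) (fun z => hPN _) (hproj_le (le_max_right _ _))
  refine ⟨u + v, hu_cont.add hv_cont, fun z => ?_, fun z => ?_, fun z => ?_⟩
  · have h1t : 1 - t ≠ 0 := by linarith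
    calc ‖u z + v z‖ ≤ a * (b * C) / (1 - t) + a * t * (b * C) / (1 - t) :=
          norm_add_le_of_le (hu_le z) (hv_le z)
      _ = a * b * (1 + t) / (1 - t) * C := by field_simp
  · have hTv : T (v z) ∈ N := by
      rw [eq_sub_of_add_eq (hv_eq z).symm]
      exact N.sub_mem (hv_mem _) (hPN _)
    exact Submodule.mem_sup.mpr ⟨u z, hu_mem z, v z, hTv, rfl⟩
  · rw [Pi.add_apply, Pi.add_apply, hu_eq, hv_eq, map_add, ← hP (G z)]
    simp only [comp_apply, ContinuousLinearEquiv.coe_coe]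
    abel

end Existence

end InvariantEquation

open InvariantEquation Function in
/-- Bijectivity of the operator `F ↦ F ∘ R - T ∘ F` on maps with values in
`Y = M + T⁻¹(N)`, together with the norm bound `a·b·(1+t)/(1-t)` for its inverse:
for every family of continuous bounded maps `g_j` there is a unique family of continuous
bounded maps `f_j` with values in `Y` such that `f_{j+1}(R_j x) - T(f_j x) = g_j x`
(indices mod `p`), and it satisfies
`max_j sup_x ‖f_j x‖ ≤ (a·b·(1+t)/(1-t)) · max_j sup_x ‖g_j x‖`. -/
theorem invariant_equation_bijectivity
    {𝕜 X : Type*} [RCLike 𝕜] [NormedAddCommGroup X] [NormedSpace 𝕜 X] [CompleteSpace X]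
    (T : X ≃L[𝕜] X) (M N : Submodule 𝕜 X)
    (hMc : IsClosed (M : Set X)) (hNc : IsClosed (N : Set X)) (hcompl : IsCompl M N)
    (hM : ∀ x ∈ M, T x ∈ M) (hN : ∀ x ∈ N, T.symm x ∈ N)
    (a t : ℝ) (ha : 1 ≤ a) (ht : t ∈ Set.Ioo (0 : ℝ) 1)
    (hMbound : ∀ (n : ℕ), ∀ y ∈ M, ‖(⇑T)^[n] y‖ ≤ a * t ^ n * ‖y‖)
    (hNbound : ∀ (n : ℕ), ∀ z ∈ N, ‖(⇑T.symm)^[n] z‖ ≤ a * t ^ n * ‖z‖)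
    (PM PN : X →L[𝕜] X)
    (hPM : ∀ x, PM x ∈ M) (hPN : ∀ x, PN x ∈ N) (hP : ∀ x, PM x + PN x = x)
    (p : ℕ) (R : Fin (p + 1) → X ≃ₜ X) (g : Fin (p + 1) → X → X)
    (hgc : ∀ j, Continuous (g j)) (hgb : ∀ j, BoundedMap (g j)) :
    (∃! f : Fin (p + 1) → X → X,
      (∀ j, Continuous (f j)) ∧ (∀ j, BoundedMap (f j)) ∧
      (∀ j x, f j x ∈ M ⊔ Submodule.comap ((T : X →L[𝕜] X) : X →ₗ[𝕜] X) N) ∧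
      (∀ j x, f (j + 1) (R j x) - T (f j x) = g j x)) ∧
    (∀ f : Fin (p + 1) → X → X,
      (∀ j, Continuous (f j)) → (∀ j, BoundedMap (f j)) →
      (∀ j x, f j x ∈ M ⊔ Submodule.comap ((T : X →L[𝕜] X) : X →ₗ[𝕜] X) N) →
      (∀ j x, f (j + 1) (R j x) - T (f j x) = g j x) →
      ∀ j x, ‖f j x‖ ≤
        a * max ‖PM‖ ‖PN‖ * (1 + t) / (1 - t) * ⨆ i, ⨆ y, ‖g i y‖) := by
  obtain ⟨ht0, ht1⟩ := ht
  have ha0 : 0 ≤ a := zero_le_one.trans ha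
  let ρ := skewProduct (Equiv.addRight 1) R
  obtain ⟨F, hFc, hFC, hFY, hF⟩ := exists_solution T hMc hNc hM hN ha0 ht0.le ht1 hMbound hNbound
    hPM hPN hP ρ (G := uncurry g) (continuous_prod_of_discrete_left.mpr hgc)
    fun z => norm_le_iSup_iSup_norm hgb z.1 z.2
  have huniq (f : Fin (p + 1) → X → X) (hfb : ∀ j, BoundedMap (f j))
      (hfY : ∀ j x, f j x ∈ M ⊔ Submodule.comap ((T : X →L[𝕜] X) : X →ₗ[𝕜] X) N)
      (hf : ∀ j x, f (j + 1) (R j x) - T (f j x) = g j x) : f = curry F := by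
    have hfF := eq_of_solution T hM hN hcompl.disjoint ha0 ht0.le ht1 hMbound hNbound hPM hPN hP
      ρ.toEquiv (G := uncurry g) (BoundedMap.uncurry hfb) ⟨_, hFC⟩ (fun z => hfY z.1 z.2) hFY
      (fun z => hf z.1 z.2) hF
    exact funext₂ fun j x => congrFun hfF (j, x)
  refine ⟨⟨curry F, ⟨fun j => hFc.comp (Continuous.prodMk_right j), fun j => ⟨_, fun x => hFC _⟩,
    fun j x => hFY _, fun j x => hF (j, x)⟩, fun f ⟨_, hfb, hfY, hf⟩ => huniq f hfb hfY hf⟩,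
    fun f _ hfb hfY hf j x => ?_⟩
  rw [huniq f hfb hfY hf]
  exact hFC _
end
end

section
/- Let X be a real or complex Banach space, T an invertible bounded linear operator on X, and M, N closed subspaces with X = M ⊕ N (topological direct sum), T(M) ⊆ M and T⁻¹(N) ⊆ N; assume there are constants a ≥ 1 and t ∈ (0,1) such that ‖Tⁿ(y)‖ ≤ a tⁿ ‖y‖ and ‖T⁻ⁿ(z)‖ ≤ a tⁿ ‖z‖ for all integers n ≥ 0, y ∈ M, z ∈ N, and let b = max(‖P_M‖, ‖P_N‖) for the projections P_M, P_N associated with the splitting. Then there exists ε > 0 (one may take ε = min{(1−t)/(a b (1+t)), ‖T⁻¹‖⁻¹}·δ for any fixed δ ∈ (0,1)) such that for every p ∈ ℕ and all bounded Lipschitz maps L₀,…,L_{p−1} : X → X with Lip(L_j) < ε for all j, there exist continuous bounded maps u₀,…,u_{p−1} : X → X such that each map h_j : x ↦ x + u_j(x) is a homeomorphism of X and (T + L_j) ∘ h_j = h_{j+1} ∘ T for all j (indices mod p); moreover max_j sup_{x∈X} ‖u_j(x)‖ ≤ (a·b·(1+t)/(1−t)) · max_j ‖L_j‖_∞. -/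
noncomputable section

/-!
Writing `h_j = id + u_j`, the conjugacy equation reads `u_{j+1} ∘ T = T ∘ u_j + L_j ∘ h_j`. For a
bounded right-hand side `g` the linear equation `w_{j+1} ∘ G_j = T ∘ w_j + g_j` along any family
of homeomorphisms `G` has the bounded solution given by Green's formula
`w_j = ∑ₖ Tᵏ P g_{j-k-1} ∘ G^{-(k+1)} - ∑ₖ T^{-(k+1)} Q g_{j+k} ∘ Gᵏ`,
of sup-norm at most `a b (1 + t) / (1 - t) · sup ‖g‖`, so for `Lip(L_j)` small the nonlinear
equation is solved by Banach's fixed point theorem. The same formula along `F_j = T + L_j`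
(homeomorphisms, as `Lip(L_j) < ‖T⁻¹‖⁻¹`) yields `v` with `(id - v_{j+1}) ∘ F_j = T ∘ (id - v_j)`.
Green's formula is natural under semiconjugacies, which shows that `id - v_j` is a left inverse of
`h_j` and that the defect `h_j ∘ (id - v_j) - id` solves an equation of the same kind whose
right-hand side is at most `Lip(L)` times the defect itself; the defect therefore vanishes.
-/

open Function BoundedContinuousFunction
open scoped NNReal
open Fin.CommRing

section Flow

variable {ι X : Type*} [AddCommGroupWithOne ι] [TopologicalSpace X]

def flow (G : ι → X ≃ₜ X) (j : ι) : ℕ → X ≃ₜ X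
  | 0 => Homeomorph.refl X
  | k + 1 => (flow G j k).trans (G (j + k))

variable {G G' : ι → X ≃ₜ X}

@[simp]
lemma flow_zero_apply (j : ι) (x : X) : flow G j 0 x = x := rfl

lemma flow_succ_apply (j : ι) (k : ℕ) (x : X) :
    flow G j (k + 1) x = G (j + k) (flow G j k x) := rfl

lemma flow_succ_apply' (j : ι) (k : ℕ) (x : X) :
    flow G j (k + 1) x = flow G (j + 1) k (G j x) := by
  induction k with
  | zero => simp [flow_succ_apply]
  | succ k ih =>
    rw [flow_succ_apply, ih, flow_succ_apply,
      show j + ((k + 1 : ℕ) : ι) = j + 1 + k by push_cast; abel]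

lemma flow_symm_succ_apply {i j : ι} {k : ℕ} (h : i + k = j) (x : X) :
    (flow G i (k + 1)).symm (G j x) = (flow G i k).symm x := by
  subst h
  exact congrArg (flow G i k).symm ((G (i + k)).symm_apply_apply x)

lemma flow_semiconj {φ : ι → X → X} (hφ : ∀ i x, φ (i + 1) (G i x) = G' i (φ i x))
    (j : ι) (k : ℕ) (x : X) : flow G' j k (φ j x) = φ (j + k) (flow G j k x) := by
  induction k with
  | zero => simp
  | succ k ih => rw [flow_succ_apply, flow_succ_apply, ih, ← hφ, Nat.cast_succ, add_assoc]

lemma flow_symm_semiconj {φ : ι → X → X} (hφ : ∀ i x, φ (i + 1) (G i x) = G' i (φ i x))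
    (j : ι) (k : ℕ) (x : X) :
    (flow G' (j - k) k).symm (φ j x) = φ (j - k) ((flow G (j - k) k).symm x) := by
  rw [Homeomorph.symm_apply_eq, flow_semiconj hφ, sub_add_cancel, Homeomorph.apply_symm_apply]

end Flow

section BoundedFamily

variable {X ι : Type*} [NormedAddCommGroup X] [Fintype ι]

lemma norm_apply_apply_le (w : ι → X →ᵇ X) (i : ι) (x : X) : ‖w i x‖ ≤ ‖w‖ :=
  ((w i).norm_coe_le_norm x).trans (norm_le_pi_norm w i)

def compIdAdd (f w : ι → X →ᵇ X) : ι → X →ᵇ X := fun i =>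
  (f i).compContinuous ⟨fun y => y + w i y, continuous_id.add (w i).continuous⟩

lemma dist_compIdAdd_le {f : ι → X →ᵇ X} {c : ℝ≥0} (hf : ∀ i, LipschitzWith c (f i))
    (w w' : ι → X →ᵇ X) : dist (compIdAdd f w) (compIdAdd f w') ≤ c * dist w w' := by
  have h0 : 0 ≤ c * dist w w' := by positivity
  refine (dist_pi_le_iff h0).2 fun i => (dist_le h0).2 fun y => ?_
  calc dist (f i (y + w i y)) (f i (y + w' i y)) ≤ c * dist (y + w i y) (y + w' i y) :=
        (hf i).dist_le_mul _ _
    _ ≤ c * dist w w' := by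
        rw [dist_add_left]
        gcongr
        exact (dist_coe_le_dist y).trans (dist_le_pi_dist w w' i)

end BoundedFamily

section Green

variable {𝕜 X ι : Type*} [NormedField 𝕜] [NormedAddCommGroup X] [NormedSpace 𝕜 X]
  [AddCommGroupWithOne ι]

structure IsExpDichotomy (T : X ≃L[𝕜] X) (P Q : X →L[𝕜] X) (C t : ℝ) : Prop where
  add_apply_eq_self : ∀ x, P x + Q x = x
  norm_iterate_le : ∀ (n : ℕ) (x : X), ‖(⇑T)^[n] (P x)‖ ≤ C * t ^ n * ‖x‖
  norm_iterate_symm_le : ∀ (n : ℕ) (x : X), ‖(⇑T.symm)^[n] (Q x)‖ ≤ C * t ^ n * ‖x‖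
  const_nonneg : 0 ≤ C
  rate_nonneg : 0 ≤ t
  rate_lt_one : t < 1

def stableTerm (T : X ≃L[𝕜] X) (P : X →L[𝕜] X) (G : ι → X ≃ₜ X) (g : ι → X → X) (j : ι)
    (k : ℕ) (x : X) : X :=
  (⇑T)^[k] (P (g (j - (k + 1 : ℕ)) ((flow G (j - (k + 1 : ℕ)) (k + 1)).symm x)))

def unstableTerm (T : X ≃L[𝕜] X) (Q : X →L[𝕜] X) (G : ι → X ≃ₜ X) (g : ι → X → X) (j : ι)
    (k : ℕ) (x : X) : X :=
  (⇑T.symm)^[k + 1] (Q (g (j + k) (flow G j k x)))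

/-- Green's formula for the bounded solution `w` of `w (j + 1) ∘ G j = T ∘ w j + g j`
(`IsExpDichotomy.green_step`). -/
def green (T : X ≃L[𝕜] X) (P Q : X →L[𝕜] X) (G : ι → X ≃ₜ X) (g : ι → X → X) (j : ι)
    (x : X) : X :=
  ∑' k, stableTerm T P G g j k x - ∑' k, unstableTerm T Q G g j k x

variable {T : X ≃L[𝕜] X} {P Q : X →L[𝕜] X} {G G' : ι → X ≃ₜ X} {g g' : ι → X → X}

lemma stableTerm_step_zero (j : ι) (x : X) : stableTerm T P G g (j + 1) 0 (G j x) = P (g j x) := by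
  rw [stableTerm, show j + 1 - ((0 + 1 : ℕ) : ι) = j by simp,
    flow_symm_succ_apply (by simp)]
  rfl

lemma stableTerm_step_succ (j : ι) (k : ℕ) (x : X) :
    stableTerm T P G g (j + 1) (k + 1) (G j x) = T (stableTerm T P G g j k x) := by
  rw [stableTerm, show j + 1 - ((k + 1 + 1 : ℕ) : ι) = j - ((k + 1 : ℕ) : ι) by push_cast; abel,
    flow_symm_succ_apply (sub_add_cancel j _), iterate_succ_apply']
  rfl

lemma map_unstableTerm_zero (j : ι) (x : X) : T (unstableTerm T Q G g j 0 x) = Q (g j x) := by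
  simp [unstableTerm]

lemma map_unstableTerm_succ (j : ι) (k : ℕ) (x : X) :
    T (unstableTerm T Q G g j (k + 1) x) = unstableTerm T Q G g (j + 1) k (G j x) := by
  rw [unstableTerm, unstableTerm, iterate_succ_apply', T.apply_symm_apply, flow_succ_apply',
    show j + ((k + 1 : ℕ) : ι) = j + 1 + k by push_cast; abel]

lemma green_semiconj {φ : ι → X → X} (hφ : ∀ i x, φ (i + 1) (G i x) = G' i (φ i x))
    (j : ι) (x : X) : green T P Q G' g j (φ j x) = green T P Q G (fun i y => g i (φ i y)) j x := by
  simp only [green, stableTerm, unstableTerm, flow_symm_semiconj hφ, flow_semiconj hφ]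

namespace IsExpDichotomy

variable {C t B B' : ℝ}

lemma mul_pow_nonneg (hT : IsExpDichotomy T P Q C t) (n : ℕ) : 0 ≤ C * t ^ n := by
  have := hT.const_nonneg; have := hT.rate_nonneg; positivity

lemma factor_nonneg (hT : IsExpDichotomy T P Q C t) : 0 ≤ C * (1 + t) / (1 - t) := by
  have := hT.const_nonneg; have := hT.rate_nonneg; have := sub_pos.2 hT.rate_lt_one; positivity

lemma hasSum_mul_geometric (hT : IsExpDichotomy T P Q C t) (A : ℝ) :
    HasSum (fun k => A * t ^ k) (A * (1 - t)⁻¹) :=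
  (hasSum_geometric_of_lt_one hT.rate_nonneg hT.rate_lt_one).mul_left A

lemma norm_stableTerm_le (hT : IsExpDichotomy T P Q C t) (hg : ∀ i y, ‖g i y‖ ≤ B) (j : ι)
    (k : ℕ) (x : X) : ‖stableTerm T P G g j k x‖ ≤ C * B * t ^ k :=
  calc _ ≤ C * t ^ k * ‖g _ _‖ := hT.norm_iterate_le k _
    _ ≤ C * t ^ k * B := mul_le_mul_of_nonneg_left (hg _ _) (hT.mul_pow_nonneg k)
    _ = C * B * t ^ k := by ring

lemma norm_unstableTerm_le (hT : IsExpDichotomy T P Q C t) (hg : ∀ i y, ‖g i y‖ ≤ B) (j : ι)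
    (k : ℕ) (x : X) : ‖unstableTerm T Q G g j k x‖ ≤ C * B * t * t ^ k :=
  calc _ ≤ C * t ^ (k + 1) * ‖g _ _‖ := hT.norm_iterate_symm_le (k + 1) _
    _ ≤ C * t ^ (k + 1) * B := mul_le_mul_of_nonneg_left (hg _ _) (hT.mul_pow_nonneg _)
    _ = C * B * t * t ^ k := by ring

lemma norm_green_le (hT : IsExpDichotomy T P Q C t) (hg : ∀ i y, ‖g i y‖ ≤ B) (j : ι) (x : X) :
    ‖green T P Q G g j x‖ ≤ C * (1 + t) / (1 - t) * B := by
  have h1t : 1 - t ≠ 0 := (sub_pos.2 hT.rate_lt_one).ne'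
  calc ‖green T P Q G g j x‖ ≤ C * B * (1 - t)⁻¹ + C * B * t * (1 - t)⁻¹ :=
        (norm_sub_le _ _).trans <| add_le_add
          (tsum_of_norm_bounded (hT.hasSum_mul_geometric _) (hT.norm_stableTerm_le hg j · x))
          (tsum_of_norm_bounded (hT.hasSum_mul_geometric _) (hT.norm_unstableTerm_le hg j · x))
    _ = C * (1 + t) / (1 - t) * B := by field_simp

variable [CompleteSpace X]

lemma summable_stableTerm (hT : IsExpDichotomy T P Q C t) (hg : ∀ i y, ‖g i y‖ ≤ B) (j : ι)
    (x : X) : Summable (stableTerm T P G g j · x) :=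
  (hT.hasSum_mul_geometric _).summable.of_norm_bounded (hT.norm_stableTerm_le hg j · x)

lemma summable_unstableTerm (hT : IsExpDichotomy T P Q C t) (hg : ∀ i y, ‖g i y‖ ≤ B) (j : ι)
    (x : X) : Summable (unstableTerm T Q G g j · x) :=
  (hT.hasSum_mul_geometric _).summable.of_norm_bounded (hT.norm_unstableTerm_le hg j · x)

lemma continuous_green (hT : IsExpDichotomy T P Q C t) (hg : ∀ i y, ‖g i y‖ ≤ B)
    (hgc : ∀ i, Continuous (g i)) (j : ι) : Continuous (green T P Q G g j) :=
  (continuous_tsum (fun k => (T.continuous.iterate k).comp <| P.continuous.comp <|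
      (hgc _).comp (flow G _ _).symm.continuous)
    (hT.hasSum_mul_geometric _).summable (hT.norm_stableTerm_le hg j)).sub
  (continuous_tsum (fun k => (T.symm.continuous.iterate (k + 1)).comp <| Q.continuous.comp <|
      (hgc _).comp (flow G j k).continuous)
    (hT.hasSum_mul_geometric _).summable (hT.norm_unstableTerm_le hg j))

lemma green_sub (hT : IsExpDichotomy T P Q C t) (hg : ∀ i y, ‖g i y‖ ≤ B)
    (hg' : ∀ i y, ‖g' i y‖ ≤ B') (j : ι) (x : X) :
    green T P Q G (fun i y => g i y - g' i y) j x = green T P Q G g j x - green T P Q G g' j x := by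
  have hs (k : ℕ) : stableTerm T P G (fun i y => g i y - g' i y) j k x
      = stableTerm T P G g j k x - stableTerm T P G g' j k x := by
    simp only [stableTerm, map_sub, iterate_map_sub]
  have hu (k : ℕ) : unstableTerm T Q G (fun i y => g i y - g' i y) j k x
      = unstableTerm T Q G g j k x - unstableTerm T Q G g' j k x := by
    simp only [unstableTerm, map_sub, iterate_map_sub]
  rw [green, green, green, tsum_congr hs, tsum_congr hu,
    (hT.summable_stableTerm hg j x).tsum_sub (hT.summable_stableTerm hg' j x),
    (hT.summable_unstableTerm hg j x).tsum_sub (hT.summable_unstableTerm hg' j x)]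
  abel

/-- The first stable and the first unstable term add up to `g j x` since `P + Q = 1`; the other
terms telescope. -/
lemma green_step (hT : IsExpDichotomy T P Q C t) (hg : ∀ i y, ‖g i y‖ ≤ B) (j : ι) (x : X) :
    green T P Q G g (j + 1) (G j x) = T (green T P Q G g j x) + g j x := by
  have hs : ∑' k, stableTerm T P G g (j + 1) k (G j x)
      = P (g j x) + T (∑' k, stableTerm T P G g j k x) := by
    rw [(hT.summable_stableTerm hg _ _).tsum_eq_zero_add, stableTerm_step_zero, T.map_tsum]
    simp only [stableTerm_step_succ]
  have hu : T (∑' k, unstableTerm T Q G g j k x)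
      = Q (g j x) + ∑' k, unstableTerm T Q G g (j + 1) k (G j x) := by
    rw [T.map_tsum, (T.summable.2 (hT.summable_unstableTerm hg j x)).tsum_eq_zero_add,
      map_unstableTerm_zero]
    simp only [map_unstableTerm_succ]
  calc _ = T (∑' k, stableTerm T P G g j k x) - (Q (g j x)
        + ∑' k, unstableTerm T Q G g (j + 1) k (G j x)) + (P (g j x) + Q (g j x)) := by
        rw [green, hs]; abel
    _ = T (green T P Q G g j x) + g j x := by rw [green, map_sub, hu, hT.add_apply_eq_self]

variable [Fintype ι]

def greenBCF (hT : IsExpDichotomy T P Q C t) (G : ι → X ≃ₜ X) (g : ι → X →ᵇ X) :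
    ι → X →ᵇ X := fun j =>
  ofNormedAddCommGroup (green T P Q G (fun i => g i) j)
    (hT.continuous_green (norm_apply_apply_le g) (fun i => (g i).continuous) j)
    (C * (1 + t) / (1 - t) * ‖g‖) (hT.norm_green_le (norm_apply_apply_le g) j)

lemma greenBCF_apply (hT : IsExpDichotomy T P Q C t) (G : ι → X ≃ₜ X) (g : ι → X →ᵇ X) (j : ι)
    (x : X) : hT.greenBCF G g j x = green T P Q G (fun i => g i) j x :=
  rfl

lemma dist_greenBCF_le (hT : IsExpDichotomy T P Q C t) (G : ι → X ≃ₜ X) (g g' : ι → X →ᵇ X) :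
    dist (hT.greenBCF G g) (hT.greenBCF G g') ≤ C * (1 + t) / (1 - t) * dist g g' := by
  have h0 : 0 ≤ C * (1 + t) / (1 - t) * dist g g' := mul_nonneg hT.factor_nonneg dist_nonneg
  refine (dist_pi_le_iff h0).2 fun j => (dist_le h0).2 fun x => ?_
  rw [greenBCF_apply, greenBCF_apply, dist_eq_norm, ← hT.green_sub (norm_apply_apply_le g)
    (norm_apply_apply_le g'), dist_eq_norm]
  exact hT.norm_green_le (fun i y => norm_apply_apply_le (g - g') i y) j x

theorem exists_green_fixedPoint (hT : IsExpDichotomy T P Q C t) (L : ι → X →ᵇ X) {c : ℝ≥0}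
    (hL : ∀ i, LipschitzWith c (L i)) (hKc : C * (1 + t) / (1 - t) * c < 1) :
    ∃ u : ι → X →ᵇ X, ∀ j x,
      green T P Q (fun _ => T.toHomeomorph) (fun i y => L i (y + u i y)) j x = u j x := by
  have hK : ContractingWith (C * (1 + t) / (1 - t) * c).toNNReal
      fun u => hT.greenBCF (fun _ => T.toHomeomorph) (compIdAdd L u) := by
    refine ⟨Real.toNNReal_lt_one.2 hKc, LipschitzWith.of_dist_le_mul fun u v => ?_⟩
    rw [Real.coe_toNNReal _ (mul_nonneg hT.factor_nonneg c.coe_nonneg), mul_assoc]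
    exact (hT.dist_greenBCF_le _ _ _).trans
      (mul_le_mul_of_nonneg_left (dist_compIdAdd_le hL u v) hT.factor_nonneg)
  exact ⟨_, fun j x => DFunLike.congr_fun (congrFun hK.fixedPoint_isFixedPt j) x⟩

lemma semiconj_of_green_fixedPoint {L u : ι → X →ᵇ X} (hT : IsExpDichotomy T P Q C t)
    (hu : ∀ j x, green T P Q (fun _ => T.toHomeomorph) (fun i y => L i (y + u i y)) j x = u j x)
    (j : ι) (x : X) : T x + u (j + 1) (T x) = T (x + u j x) + L j (x + u j x) := by
  have h := hT.green_step (G := fun _ => T.toHomeomorph)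
    (fun i y => norm_apply_apply_le L i (y + u i y)) j x
  rw [hu, hu, ContinuousLinearEquiv.coe_toHomeomorph] at h
  rw [h, T.map_add]
  abel

end IsExpDichotomy

end Green

section Perturbation

variable {𝕜 X ι : Type*} [NontriviallyNormedField 𝕜] [NormedAddCommGroup X] [NormedSpace 𝕜 X]
  [CompleteSpace X]

def perturbHomeomorph (T : X ≃L[𝕜] X) {L : X → X} {c : ℝ≥0} (hL : LipschitzWith c L)
    (hc : c * ‖(T.symm : X →L[𝕜] X)‖₊ < 1) : X ≃ₜ X :=
  ApproximatesLinearOn.toHomeomorph (fun x => T x + L x) (f' := T)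
    (ApproximatesLinearOn.approximatesLinearOn_iff_lipschitzOnWith.2 <| by
      convert hL.lipschitzOnWith (s := Set.univ)
      ext x
      simp)
    (T.subsingleton_or_nnnorm_symm_pos.imp id fun h => (NNReal.lt_inv_iff_mul_lt h.ne').2 hc)

lemma perturbHomeomorph_apply (T : X ≃L[𝕜] X) {L : X → X} {c : ℝ≥0} (hL : LipschitzWith c L)
    (hc : c * ‖(T.symm : X →L[𝕜] X)‖₊ < 1) (x : X) : perturbHomeomorph T hL hc x = T x + L x :=
  rfl

namespace IsExpDichotomy

variable [AddCommGroupWithOne ι] [Fintype ι] {T : X ≃L[𝕜] X} {P Q : X →L[𝕜] X} {C t : ℝ}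
  {L u : ι → X →ᵇ X} {c : ℝ≥0}

section Perturbed

variable (hL : ∀ i, LipschitzWith c (L i)) (hTc : c * ‖(T.symm : X →L[𝕜] X)‖₊ < 1)

lemma semiconj_sub_green_perturb (hT : IsExpDichotomy T P Q C t) (j : ι) (x : X) :
    perturbHomeomorph T (hL j) hTc x
        - green T P Q (fun i => perturbHomeomorph T (hL i) hTc) (fun i => L i) (j + 1)
          (perturbHomeomorph T (hL j) hTc x)
      = T (x - green T P Q (fun i => perturbHomeomorph T (hL i) hTc) (fun i => L i) j x) := by
  rw [hT.green_step (norm_apply_apply_le L), map_sub, perturbHomeomorph_apply]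
  abel

lemma green_perturb_comp_idAdd (hT : IsExpDichotomy T P Q C t)
    (hu : ∀ j x, green T P Q (fun _ => T.toHomeomorph) (fun i y => L i (y + u i y)) j x = u j x)
    (j : ι) (x : X) :
    green T P Q (fun i => perturbHomeomorph T (hL i) hTc) (fun i => L i) j (x + u j x) = u j x :=
  (green_semiconj (φ := fun i x => x + u i x) (hT.semiconj_of_green_fixedPoint hu) j x).trans
    (hu j x)

lemma fixedPoint_apply_sub_green_perturb (hT : IsExpDichotomy T P Q C t)
    (hKc : C * (1 + t) / (1 - t) * c < 1)
    (hu : ∀ j x, green T P Q (fun _ => T.toHomeomorph) (fun i y => L i (y + u i y)) j x = u j x)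
    (j : ι) (x : X) :
    u j (x - green T P Q (fun i => perturbHomeomorph T (hL i) hTc) (fun i => L i) j x)
      = green T P Q (fun i => perturbHomeomorph T (hL i) hTc) (fun i => L i) j x := by
  set F := fun i => perturbHomeomorph T (hL i) hTc
  set v := hT.greenBCF F L
  let ψ : ι → X →ᵇ X := fun j =>
    (u j).compContinuous ⟨fun x => x - v j x, continuous_id.sub (v j).continuous⟩ - v j
  have hψ (j : ι) (x : X) :
      ψ j x = green T P Q F (fun i y => L i (y + ψ i y) - L i y) j x := by
    rw [hT.green_sub (fun i y => norm_apply_apply_le L i _) (norm_apply_apply_le L)]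
    have h := green_semiconj (T := T) (P := P) (Q := Q) (φ := fun i x => x - v i x)
      (G' := fun _ => T.toHomeomorph) (g := fun i y => L i (y + u i y))
      (semiconj_sub_green_perturb hL hTc hT) j x
    rw [hu] at h
    simp only [ψ, coe_sub, coe_compContinuous, ContinuousMap.coe_mk, Pi.sub_apply, comp_apply]
    rw [h, greenBCF_apply]
    congr 2
    funext i y
    show L i _ = L i (y + (u i (y - v i y) - v i y))
    abel_nf
  have hnorm : ‖ψ‖ ≤ C * (1 + t) / (1 - t) * c * ‖ψ‖ := by
    have h0 : 0 ≤ C * (1 + t) / (1 - t) * c * ‖ψ‖ := by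
      have := hT.factor_nonneg; positivity
    refine (pi_norm_le_iff_of_nonneg h0).2 fun j => (norm_le h0).2 fun x => ?_
    rw [hψ, mul_assoc]
    refine hT.norm_green_le (fun i y => ?_) j x
    calc ‖L i (y + ψ i y) - L i y‖ ≤ c * ‖y + ψ i y - y‖ := by
          rw [← dist_eq_norm, ← dist_eq_norm]; exact (hL i).dist_le_mul _ _
      _ ≤ c * ‖ψ‖ := by rw [add_sub_cancel_left]; gcongr; exact norm_apply_apply_le ψ i y
  have hψ0 : ψ j x = 0 := by
    have : ‖ψ‖ = 0 := le_antisymm (by nlinarith [norm_nonneg ψ]) (norm_nonneg ψ)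
    simp [norm_eq_zero.1 this]
  exact sub_eq_zero.1 hψ0

end Perturbed

theorem exists_homeomorph_idAdd (hT : IsExpDichotomy T P Q C t)
    (hL : ∀ i, LipschitzWith c (L i)) (hTc : c * ‖(T.symm : X →L[𝕜] X)‖₊ < 1)
    (hKc : C * (1 + t) / (1 - t) * c < 1)
    (hu : ∀ j x, green T P Q (fun _ => T.toHomeomorph) (fun i y => L i (y + u i y)) j x = u j x)
    (j : ι) : ∃ h : X ≃ₜ X, ∀ x, h x = x + u j x := by
  let v := green T P Q (fun i => perturbHomeomorph T (hL i) hTc) (fun i => L i) j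
  refine ⟨{ toFun := fun x => x + u j x
            invFun := fun x => x - v x
            left_inv := fun x => ?_
            right_inv := fun x => ?_
            continuous_toFun := continuous_id.add (u j).continuous
            continuous_invFun := continuous_id.sub <|
              hT.continuous_green (norm_apply_apply_le L) (fun i => (L i).continuous) j },
    fun x => rfl⟩
  · change x + u j x - v (x + u j x) = x
    rw [show v (x + u j x) = u j x from hT.green_perturb_comp_idAdd hL hTc hu j x,
      add_sub_cancel_right]
  · change x - v x + u j (x - v x) = x
    rw [show u j (x - v x) = v x from hT.fixedPoint_apply_sub_green_perturb hL hTc hKc hu j x,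
      sub_add_cancel]

end IsExpDichotomy

end Perturbation

lemma IsExpDichotomy.of_splitting {𝕜 X : Type*} [NontriviallyNormedField 𝕜]
    [NormedAddCommGroup X] [NormedSpace 𝕜 X] {T : X ≃L[𝕜] X} {P Q : X →L[𝕜] X} {M N : Set X}
    {a t : ℝ}
    (hPQ : ∀ x, P x + Q x = x) (hPM : ∀ x, P x ∈ M) (hQN : ∀ x, Q x ∈ N)
    (hM : ∀ (n : ℕ), ∀ y ∈ M, ‖(⇑T)^[n] y‖ ≤ a * t ^ n * ‖y‖)
    (hN : ∀ (n : ℕ), ∀ z ∈ N, ‖(⇑T.symm)^[n] z‖ ≤ a * t ^ n * ‖z‖)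
    (ha : 0 ≤ a) (ht0 : 0 ≤ t) (ht1 : t < 1) :
    IsExpDichotomy T P Q (a * max ‖P‖ ‖Q‖) t where
  add_apply_eq_self := hPQ
  norm_iterate_le n x :=
    calc ‖(⇑T)^[n] (P x)‖ ≤ a * t ^ n * ‖P x‖ := hM n _ (hPM x)
      _ ≤ a * t ^ n * (max ‖P‖ ‖Q‖ * ‖x‖) := by
          gcongr; exact (P.le_opNorm x).trans (by gcongr; exact le_max_left _ _)
      _ = a * max ‖P‖ ‖Q‖ * t ^ n * ‖x‖ := by ring
  norm_iterate_symm_le n x :=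
    calc ‖(⇑T.symm)^[n] (Q x)‖ ≤ a * t ^ n * ‖Q x‖ := hN n _ (hQN x)
      _ ≤ a * t ^ n * (max ‖P‖ ‖Q‖ * ‖x‖) := by
          gcongr; exact (Q.le_opNorm x).trans (by gcongr; exact le_max_right _ _)
      _ = a * max ‖P‖ ‖Q‖ * t ^ n * ‖x‖ := by ring
  const_nonneg := by positivity
  rate_nonneg := ht0
  rate_lt_one := ht1

lemma LipLt.exists_uniform {ι X Y : Type*} [Finite ι] [Nonempty ι] [PseudoEMetricSpace X]
    [PseudoEMetricSpace Y] {L : ι → X → Y} {ε : ℝ} (h : ∀ i, LipLt (L i) ε) :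
    ∃ c : ℝ≥0, (c : ℝ) < ε ∧ ∀ i, LipschitzWith c (L i) := by
  choose c hcε hc using h
  obtain ⟨i₀, hi₀⟩ := Finite.exists_max c
  exact ⟨c i₀, hcε i₀, fun i => (hc i).weaken (hi₀ i)⟩

lemma BoundedMap.norm_le_iSup_iSup {ι X Y : Type*} [Finite ι] [Norm Y] {L : ι → X → Y}
    (h : ∀ i, BoundedMap (L i)) (i : ι) (y : X) : ‖L i y‖ ≤ ⨆ i, ⨆ y, ‖L i y‖ := by
  have hbdd (i : ι) : BddAbove (Set.range fun y => ‖L i y‖) :=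
    let ⟨C, hC⟩ := h i
    ⟨C, Set.forall_mem_range.2 hC⟩
  exact (le_ciSup (hbdd i) y).trans
    (le_ciSup (f := fun i => ⨆ y, ‖L i y‖) (Set.finite_range _).bddAbove i)

lemma mul_lt_one_of_lt_inv_add_one {c m y : ℝ} (hc : 0 ≤ c) (hm : 0 ≤ m) (hy : y ≤ m)
    (hcm : c < (m + 1)⁻¹) : y * c < 1 := by
  have : (m + 1) * c < 1 := (lt_inv_mul_iff₀ (by positivity)).1 (by simpa using hcm)
  nlinarith

theorem semiconjugacy_existence_H_general
    {𝕜 X : Type*} [RCLike 𝕜] [NormedAddCommGroup X] [NormedSpace 𝕜 X] [CompleteSpace X]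
    (T : X ≃L[𝕜] X) (M N : Submodule 𝕜 X)
    (a t : ℝ) (ha : 1 ≤ a) (ht : t ∈ Set.Ioo (0 : ℝ) 1)
    (hMbound : ∀ (n : ℕ), ∀ y ∈ M, ‖(⇑T)^[n] y‖ ≤ a * t ^ n * ‖y‖)
    (hNbound : ∀ (n : ℕ), ∀ z ∈ N, ‖(⇑T.symm)^[n] z‖ ≤ a * t ^ n * ‖z‖)
    (PM PN : X →L[𝕜] X)
    (hPM : ∀ x, PM x ∈ M) (hPN : ∀ x, PN x ∈ N) (hP : ∀ x, PM x + PN x = x) :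
    ∃ ε > 0, ∀ (p : ℕ) (L : Fin (p + 1) → X → X),
      (∀ j, BoundedMap (L j)) → (∀ j, LipLt (L j) ε) →
      ∃ u : Fin (p + 1) → X → X,
        (∀ j, Continuous (u j)) ∧ (∀ j, BoundedMap (u j)) ∧
        (∀ j, ∃ h : X ≃ₜ X, ∀ x : X, h x = x + u j x) ∧
        (∀ j, ∀ x : X, T (x + u j x) + L j (x + u j x) = T x + u (j + 1) (T x)) ∧
        (∀ j, ∀ x : X, ‖u j x‖ ≤
          a * max ‖PM‖ ‖PN‖ * (1 + t) / (1 - t) * ⨆ i, ⨆ y, ‖L i y‖) := by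
  have hT : IsExpDichotomy T PM PN (a * max ‖PM‖ ‖PN‖) t :=
    .of_splitting hP hPM hPN hMbound hNbound (by linarith) ht.1.le ht.2
  set m := max (a * max ‖PM‖ ‖PN‖ * (1 + t) / (1 - t)) ‖(T.symm : X →L[𝕜] X)‖
  have hm : 0 ≤ m := le_max_of_le_right (norm_nonneg _)
  refine ⟨(m + 1)⁻¹, by positivity, fun p L hLb hLip => ?_⟩
  obtain ⟨c, hcm, hc⟩ := LipLt.exists_uniform hLip
  have hKc := mul_lt_one_of_lt_inv_add_one c.coe_nonneg hm (le_max_left _ _) hcm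
  have hTc : c * ‖(T.symm : X →L[𝕜] X)‖₊ < 1 := by
    rw [← NNReal.coe_lt_coe, NNReal.coe_mul, coe_nnnorm, NNReal.coe_one, mul_comm]
    exact mul_lt_one_of_lt_inv_add_one c.coe_nonneg hm (le_max_right _ _) hcm
  let Lb : Fin (p + 1) → X →ᵇ X := fun j =>
    ofNormedAddCommGroup (L j) (hc j).continuous _ (hLb j).choose_spec
  obtain ⟨u, hu⟩ := hT.exists_green_fixedPoint Lb hc hKc
  refine ⟨fun j => u j, fun j => (u j).continuous, fun j => ⟨‖u j‖, (u j).norm_coe_le_norm⟩,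
    hT.exists_homeomorph_idAdd hc hTc hKc hu,
    fun j x => (hT.semiconj_of_green_fixedPoint hu j x).symm, fun j x => ?_⟩
  change ‖u j x‖ ≤ _
  rw [← hu]
  exact hT.norm_green_le (fun i y => BoundedMap.norm_le_iSup_iSup hLb i _) j x

/-- Existence of the semiconjugacies `h_j = I + u_j` with `(T + L_j) ∘ h_j = h_{j+1} ∘ T`
(indices mod `p`), each `h_j` a homeomorphism, with the bound
`max_j sup_x ‖u_j x‖ ≤ (a·b·(1+t)/(1-t)) · max_j ‖L_j‖_∞`. -/
theorem semiconjugacy_existence_H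
    {𝕜 X : Type*} [RCLike 𝕜] [NormedAddCommGroup X] [NormedSpace 𝕜 X] [CompleteSpace X]
    (T : X ≃L[𝕜] X) (M N : Submodule 𝕜 X)
    (hMc : IsClosed (M : Set X)) (hNc : IsClosed (N : Set X)) (hcompl : IsCompl M N)
    (hM : ∀ x ∈ M, T x ∈ M) (hN : ∀ x ∈ N, T.symm x ∈ N)
    (a t : ℝ) (ha : 1 ≤ a) (ht : t ∈ Set.Ioo (0 : ℝ) 1)
    (hMbound : ∀ (n : ℕ), ∀ y ∈ M, ‖(⇑T)^[n] y‖ ≤ a * t ^ n * ‖y‖)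
    (hNbound : ∀ (n : ℕ), ∀ z ∈ N, ‖(⇑T.symm)^[n] z‖ ≤ a * t ^ n * ‖z‖)
    (PM PN : X →L[𝕜] X)
    (hPM : ∀ x, PM x ∈ M) (hPN : ∀ x, PN x ∈ N) (hP : ∀ x, PM x + PN x = x) :
    ∃ ε > 0, ∀ (p : ℕ) (L : Fin (p + 1) → X → X),
      (∀ j, BoundedMap (L j)) → (∀ j, LipLt (L j) ε) →
      ∃ u : Fin (p + 1) → X → X,
        (∀ j, Continuous (u j)) ∧ (∀ j, BoundedMap (u j)) ∧
        (∀ j, ∃ h : X ≃ₜ X, ∀ x : X, h x = x + u j x) ∧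
        (∀ j, ∀ x : X, T (x + u j x) + L j (x + u j x) = T x + u (j + 1) (T x)) ∧
        (∀ j, ∀ x : X, ‖u j x‖ ≤
          a * max ‖PM‖ ‖PN‖ * (1 + t) / (1 - t) * ⨆ i, ⨆ y, ‖L i y‖) :=
  semiconjugacy_existence_H_general T M N a t ha ht hMbound hNbound PM PN hPM hPN hP
end
end

section
/- Let X be a real or complex Banach space, T an invertible bounded linear operator on X, and M, N closed subspaces with X = M ⊕ N (topological direct sum), T(M) ⊆ M and T⁻¹(N) ⊆ N; assume there are constants a ≥ 1 and t ∈ (0,1) such that ‖Tⁿ(y)‖ ≤ a tⁿ ‖y‖ and ‖T⁻ⁿ(z)‖ ≤ a tⁿ ‖z‖ for all integers n ≥ 0, y ∈ M, z ∈ N. Then there exists ε > 0 such that for every p ∈ ℕ and all bounded Lipschitz maps L₀,…,L_{p−1} : X → X with Lip(L_j) < ε for all j, there exist continuous bounded maps v₀,…,v_{p−1} : X → X such that, setting k_j : x ↦ x + v_j(x), one has k_{j+1} ∘ (T + L_j) = T ∘ k_j for all j (indices mod p). -/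
/-!
Write `F_j = T + L_j`, let `P, Q` be the projections of `X = M ⊕ N`, and look for `v_j = u_j + w_j`
with `u_j` valued in `M` and `w_j` in `N`. The equation `k_{j+1} ∘ F_j = T ∘ k_j` then splits into
`u_{j+1} = T u_j ∘ F_j⁻¹ - P L_j ∘ F_j⁻¹` (solved forwards in `j`) and
`w_j = T⁻¹ (w_{j+1} ∘ F_j) + T⁻¹ Q L_j` (solved backwards in `j`).
Packing a family over `j` into one bounded continuous function on `ι × X` (`ι` discrete), each is a
fixed-point equation `w = A ∘ w ∘ H + b` with `A = T ∘ P` or `A = T⁻¹ ∘ Q`. Since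
`‖Aⁿ⁺¹‖ ≤ a tⁿ⁺¹ ‖P‖` (resp. `‖Q‖`), some iterate of `w ↦ A ∘ w ∘ H + b` is a contraction.
The smallness of `Lip(L_j)` only serves to make `F_j` a homeomorphism (`Lip(L_j) ‖T⁻¹‖ < 1`).
-/

noncomputable section

open Filter Topology BoundedContinuousFunction

namespace BoundedContinuousFunction

variable {𝕜 Y E : Type*} [NontriviallyNormedField 𝕜] [TopologicalSpace Y]
  [NormedAddCommGroup E] [NormedSpace 𝕜 E]

def twistedTransfer (A : E →L[𝕜] E) (H : C(Y, Y)) (b : Y →ᵇ E) (w : Y →ᵇ E) : Y →ᵇ E :=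
  A.compLeftContinuousBounded Y (w.compContinuous H) + b

variable (A : E →L[𝕜] E) (H : C(Y, Y)) (b : Y →ᵇ E)

theorem twistedTransfer_apply (w : Y →ᵇ E) (y : Y) :
    twistedTransfer A H b w y = A (w (H y)) + b y :=
  rfl

theorem iterate_twistedTransfer_sub_apply (n : ℕ) (w w' : Y →ᵇ E) (y : Y) :
    (twistedTransfer A H b)^[n] w y - (twistedTransfer A H b)^[n] w' y
      = (A ^ n) (w (H^[n] y) - w' (H^[n] y)) := by
  induction n generalizing y with
  | zero => simp
  | succ n ih =>
    rw [Function.iterate_succ_apply', Function.iterate_succ_apply', twistedTransfer_apply,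
      twistedTransfer_apply, add_sub_add_right_eq_sub, ← map_sub, ih, pow_succ',
      mul_apply_eq_comp, Function.iterate_succ_apply]

theorem dist_iterate_twistedTransfer_le (n : ℕ) (w w' : Y →ᵇ E) :
    dist ((twistedTransfer A H b)^[n] w) ((twistedTransfer A H b)^[n] w')
      ≤ ‖A ^ n‖ * dist w w' :=
  (dist_le (by positivity)).2 fun y => by
    rw [dist_eq_norm, iterate_twistedTransfer_sub_apply]
    exact (A ^ n).le_opNorm_of_le (by rw [← dist_eq_norm]; exact dist_coe_le_dist _)

theorem exists_eq_apply_comp_add [CompleteSpace E] {n : ℕ} (hA : ‖A ^ n‖ < 1) :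
    ∃ w : Y →ᵇ E, ∀ y, w y = A (w (H y)) + b y := by
  have hcontr : ContractingWith ‖A ^ n‖₊ (twistedTransfer A H b)^[n] :=
    ⟨hA, LipschitzWith.of_dist_le_mul (dist_iterate_twistedTransfer_le A H b n)⟩
  exact ⟨_, fun y => (DFunLike.congr_fun hcontr.isFixedPt_fixedPoint_iterate y).symm⟩

end BoundedContinuousFunction

section ContractingOnComplement

variable {𝕜 Y E : Type*} [NontriviallyNormedField 𝕜] [NormedAddCommGroup E] [NormedSpace 𝕜 E]
  {M N : Submodule 𝕜 E} (h : M.IsTopCompl N) (A : E →L[𝕜] E)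

theorem pow_succ_comp_projectionL_apply (hA : ∀ x ∈ M, A x ∈ M) (n : ℕ) (x : E) :
    ((A ∘L M.projectionL N h) ^ (n + 1)) x = A^[n + 1] (M.projectionL N h x) := by
  induction n with
  | zero => simp
  | succ n ih =>
    have hmem : A^[n + 1] (M.projectionL N h x) ∈ M :=
      Set.MapsTo.iterate hA (n + 1) (Submodule.projectionL_apply_mem h x)
    rw [pow_succ', mul_apply_eq_comp, ih, ContinuousLinearMap.comp_apply,
      (Submodule.projectionL_eq_self_iff h _).2 hmem, Function.iterate_succ_apply' _ (n + 1)]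

theorem exists_norm_pow_comp_projectionL_lt_one (hA : ∀ x ∈ M, A x ∈ M) {a t : ℝ} (ha : 0 ≤ a)
    (ht₀ : 0 ≤ t) (ht₁ : t < 1) (hbound : ∀ (n : ℕ), ∀ y ∈ M, ‖A^[n] y‖ ≤ a * t ^ n * ‖y‖) :
    ∃ n, ‖(A ∘L M.projectionL N h) ^ n‖ < 1 := by
  set P := M.projectionL N h
  have hlim : Tendsto (fun n => a * t ^ (n + 1) * ‖P‖) atTop (𝓝 0) := by
    simpa using (((tendsto_pow_atTop_nhds_zero_of_lt_one ht₀ ht₁).comp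
      (tendsto_add_atTop_nat 1)).const_mul a).mul_const ‖P‖
  obtain ⟨n, hn⟩ := (hlim.eventually (gt_mem_nhds one_pos)).exists
  refine ⟨n + 1, ((A ∘L P) ^ (n + 1)).opNorm_le_bound (by positivity) (fun x => ?_) |>.trans_lt hn⟩
  rw [pow_succ_comp_projectionL_apply h A hA, mul_assoc]
  exact (hbound _ _ (Submodule.projectionL_apply_mem h x)).trans
    (mul_le_mul_of_nonneg_left (P.le_opNorm x) (by positivity))

theorem exists_eq_apply_comp_add_of_mem [TopologicalSpace Y] [CompleteSpace E]
    (hMc : M.ClosedComplemented) (hA : ∀ x ∈ M, A x ∈ M) {a t : ℝ} (ha : 0 ≤ a)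
    (ht₀ : 0 ≤ t) (ht₁ : t < 1) (hbound : ∀ (n : ℕ), ∀ y ∈ M, ‖A^[n] y‖ ≤ a * t ^ n * ‖y‖)
    (H : C(Y, Y)) (b : Y →ᵇ E) (hb : ∀ y, b y ∈ M) :
    ∃ w : Y →ᵇ E, ∀ y, w y = A (w (H y)) + b y := by
  obtain ⟨N, h⟩ := hMc.exists_isTopCompl
  obtain ⟨n, hn⟩ := exists_norm_pow_comp_projectionL_lt_one h A hA ha ht₀ ht₁ hbound
  obtain ⟨w, hw⟩ := BoundedContinuousFunction.exists_eq_apply_comp_add _ H b hn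
  have hwM : ∀ y, w y ∈ M := fun y =>
    hw y ▸ M.add_mem (hA _ (Submodule.projectionL_apply_mem h _)) (hb y)
  refine ⟨w, fun y => ?_⟩
  rw [hw y, ContinuousLinearMap.comp_apply, (Submodule.projectionL_eq_self_iff h _).2 (hwM _)]

end ContractingOnComplement

theorem exists_homeomorph_eq_add_of_lipschitzWith {𝕜 E : Type*} [NontriviallyNormedField 𝕜]
    [NormedAddCommGroup E] [NormedSpace 𝕜 E] [CompleteSpace E] (T : E ≃L[𝕜] E) {L : E → E}
    {c : NNReal} (hL : LipschitzWith c L) (hc : c * ‖(T.symm : E →L[𝕜] E)‖ < 1) :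
    ∃ e : E ≃ₜ E, ∀ x, e x = T x + L x := by
  have happrox : ApproximatesLinearOn (fun x => T x + L x) (T : E →L[𝕜] E) Set.univ c :=
    fun x _ y _ => by
      simpa [← dist_eq_norm, add_sub_add_comm, map_sub] using hL.dist_le_mul x y
  have hsmall : Subsingleton E ∨ c < ‖(T.symm : E →L[𝕜] E)‖₊⁻¹ :=
    T.subsingleton_or_nnnorm_symm_pos.imp_right fun hpos =>
      (NNReal.lt_inv_iff_mul_lt hpos.ne').2 (by exact_mod_cast hc)
  exact ⟨happrox.toHomeomorph _ hsmall, fun _ => rfl⟩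

theorem exists_boundedContinuous_uncurry_eq {ι X E : Type*} [TopologicalSpace ι]
    [DiscreteTopology ι] [Finite ι] [TopologicalSpace X] [SeminormedAddCommGroup E]
    (f : ι → X → E) (hc : ∀ j, Continuous (f j)) (hb : ∀ j, BoundedMap (f j)) :
    ∃ g : ι × X →ᵇ E, ∀ j x, g (j, x) = f j x := by
  choose C hC using hb
  obtain ⟨B, hB⟩ := (Set.finite_range C).bddAbove
  exact ⟨.ofNormedAddCommGroup (Function.uncurry f) (continuous_prod_of_discrete_left.2 hc) B
    fun jx => (hC _ _).trans (hB ⟨_, rfl⟩), fun _ _ => rfl⟩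

theorem exists_boundedContinuous_semiconj_of_homeomorph {𝕜 ι E : Type*}
    [NontriviallyNormedField 𝕜] [TopologicalSpace ι] [DiscreteTopology ι] [NormedAddCommGroup E]
    [NormedSpace 𝕜 E] [CompleteSpace E] (T : E ≃L[𝕜] E) {M N : Submodule 𝕜 E}
    (h : M.IsTopCompl N) (hM : ∀ x ∈ M, T x ∈ M) (hN : ∀ x ∈ N, T.symm x ∈ N) {a t : ℝ}
    (ha : 0 ≤ a) (ht₀ : 0 ≤ t) (ht₁ : t < 1)
    (hMbound : ∀ (n : ℕ), ∀ y ∈ M, ‖(⇑T)^[n] y‖ ≤ a * t ^ n * ‖y‖)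
    (hNbound : ∀ (n : ℕ), ∀ z ∈ N, ‖(⇑T.symm)^[n] z‖ ≤ a * t ^ n * ‖z‖)
    (σ : ι ≃ ι) (ℓ : ι × E →ᵇ E) (e : ι → E ≃ₜ E) (he : ∀ j x, e j x = T x + ℓ (j, x)) :
    ∃ v : ι × E →ᵇ E, ∀ j x, e j x + v (σ j, e j x) = T (x + v (j, x)) := by
  set P := M.projectionL N h
  set Q := N.projectionL M h.symm
  let back : C(ι × E, ι × E) := ⟨fun jy => (σ.symm jy.1, (e (σ.symm jy.1)).symm jy.2),
    (continuous_of_discreteTopology.comp continuous_fst).prodMk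
      (continuous_prod_of_discrete_left.2 fun i => (e (σ.symm i)).symm.continuous)⟩
  let forth : C(ι × E, ι × E) := ⟨fun jx => (σ jx.1, e jx.1 jx.2),
    (continuous_of_discreteTopology.comp continuous_fst).prodMk
      (continuous_prod_of_discrete_left.2 fun i => (e i).continuous)⟩
  obtain ⟨u, hu⟩ := exists_eq_apply_comp_add_of_mem (T : E →L[𝕜] E) h.closedComplemented hM
    ha ht₀ ht₁ hMbound back (-(P.compLeftContinuousBounded _ (ℓ.compContinuous back)))
    fun _ => M.neg_mem (Submodule.projectionL_apply_mem h _)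
  obtain ⟨w, hw⟩ := exists_eq_apply_comp_add_of_mem (T.symm : E →L[𝕜] E)
    h.symm.closedComplemented hN ha ht₀ ht₁ hNbound forth
    (((T.symm : E →L[𝕜] E) ∘L Q).compLeftContinuousBounded _ ℓ)
    fun _ => hN _ (Submodule.projectionL_apply_mem h.symm _)
  refine ⟨u + w, fun j x => ?_⟩
  have hu' : u (σ j, e j x) = T (u (j, x)) - P (ℓ (j, x)) := by
    simpa [back, sub_eq_add_neg] using hu (σ j, e j x)
  have hw' : w (σ j, e j x) = T (w (j, x)) - Q (ℓ (j, x)) := by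
    simp [hw (j, x), forth]
  have hsplit : ℓ (j, x) = P (ℓ (j, x)) + Q (ℓ (j, x)) :=
    (Submodule.projectionL_add_projectionL_eq_self h _).symm
  rw [BoundedContinuousFunction.coe_add, Pi.add_apply, Pi.add_apply, hu', hw', he, map_add,
    map_add]
  linear_combination (norm := module) hsplit

/-- Existence of the maps `k_j = I + v_j` with `k_{j+1} ∘ (T + L_j) = T ∘ k_j`
(indices mod `p`). -/
theorem semiconjugacy_existence_K
    {𝕜 X : Type*} [RCLike 𝕜] [NormedAddCommGroup X] [NormedSpace 𝕜 X] [CompleteSpace X]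
    (T : X ≃L[𝕜] X) (M N : Submodule 𝕜 X)
    (hMc : IsClosed (M : Set X)) (hNc : IsClosed (N : Set X)) (hcompl : IsCompl M N)
    (hM : ∀ x ∈ M, T x ∈ M) (hN : ∀ x ∈ N, T.symm x ∈ N)
    (a t : ℝ) (ha : 1 ≤ a) (ht : t ∈ Set.Ioo (0 : ℝ) 1)
    (hMbound : ∀ (n : ℕ), ∀ y ∈ M, ‖(⇑T)^[n] y‖ ≤ a * t ^ n * ‖y‖)
    (hNbound : ∀ (n : ℕ), ∀ z ∈ N, ‖(⇑T.symm)^[n] z‖ ≤ a * t ^ n * ‖z‖) :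
    ∃ ε > 0, ∀ (p : ℕ) (L : Fin (p + 1) → X → X),
      (∀ j, BoundedMap (L j)) → (∀ j, LipLt (L j) ε) →
      ∃ v : Fin (p + 1) → X → X,
        (∀ j, Continuous (v j)) ∧ (∀ j, BoundedMap (v j)) ∧
        (∀ j, ∀ x : X, (T x + L j x) + v (j + 1) (T x + L j x) = T (x + v j x)) := by
  set S := ‖(T.symm : X →L[𝕜] X)‖
  refine ⟨(S + 1)⁻¹, by positivity, fun p L hLb hLip => ?_⟩
  choose c hcε hc using hLip
  have hsmall : ∀ j, c j * S < 1 := fun j => by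
    have h : c j * (S + 1) < 1 := by rw [← lt_div_iff₀ (by positivity), one_div]; exact hcε j
    nlinarith [(c j).2]
  choose e he using fun j => exists_homeomorph_eq_add_of_lipschitzWith T (hc j) (hsmall j)
  obtain ⟨ℓ, hℓ⟩ := exists_boundedContinuous_uncurry_eq L (fun j => (hc j).continuous) hLb
  obtain ⟨v, hv⟩ := exists_boundedContinuous_semiconj_of_homeomorph T
    (Submodule.IsCompl.isTopCompl_of_isClosed hcompl hMc hNc) hM hN (zero_le_one.trans ha)
    ht.1.le ht.2 hMbound hNbound (Equiv.addRight 1) ℓ e (fun j x => by rw [he, hℓ])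
  refine ⟨fun j x => v (j, x), fun j => v.continuous.comp (Continuous.prodMk_right j),
    fun j => ⟨‖v‖, fun x => v.norm_coe_le_norm _⟩, fun j x => ?_⟩
  simpa [he] using hv j x
end
end
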